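/- arXiv:2003.09215 — 8 statements merged into one kernel-verified Lean document; each statement's English description precedes it below -/
import Mathlib

section
/- Let Γ be a finite directed acyclic graph, R a commutative ring, and w a function assigning to each edge of Γ an element of R. For a directed path P, let w(P) be the product of the weights of its edges, and for vertices u, v let e(u,v) = Σ_P w(P), the (finite) sum over all directed paths P from u to v. Fix vertices a_1,…,a_n and b_1,…,b_n of Γ. Then det(e(a_i,b_j))_{1≤i,j≤n} = Σ_{σ ∈ S_n} sgn(σ) · Σ_{(P_1,…,P_n)} ∏_{i=1}^n w(P_i), where the inner sum ranges over all n-tuples (P_1,…,P_n) of pairwise vertex-disjoint directed paths such that P_i goes from a_i to b_{σ(i)}. -/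
/-- A directed path from `u` to `v` in the graph with edge relation `E`, recorded as the
list of vertices it visits (so a path with no edges is `[u]` with `u = v`). -/
def IsDirPath {V : Type*} (E : V → V → Prop) (u v : V) (l : List V) : Prop :=
  l.Chain' E ∧ l.head? = some u ∧ l.getLast? = some v

/-- The weight of a path: the product of the weights of its (consecutive) edges. -/
def pathWeight {V R : Type*} [CommRing R] (w : V → V → R) (l : List V) : R :=
  ((l.zip l.tail).map fun q => w q.1 q.2).prod

/-!
Expanding the determinant gives the signed sum, over all `σ` and all tuples of paths
`P i : a i → b (σ i)`, of the weights `∏ i, w (P i)`. On tuples in which two paths meet, take the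
first crossing: the least `i` such that `P i` meets another path, the first vertex `v` of `P i`
on another path, and the least `j ≠ i` with `v ∈ P j`. Exchanging the tails of `P i` and `P j`
after `v` preserves the weight, multiplies `σ` by the transposition `(i j)`, and does not move the
first crossing, so it is a sign-reversing involution and these terms cancel. Acyclicity makes
every path simple, which is what keeps the first crossing in place, and makes the sums finite.
-/

open Finset Equiv

namespace List

variable {α : Type*}

theorem IsChain.nodup_of_acyclic {E : α → α → Prop}
    (hacyc : ∀ l : List α, l.IsChain E → 2 ≤ l.length → l.head? ≠ l.getLast?)
    {l : List α} (hl : l.IsChain E) : l.Nodup := by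
  induction l with
  | nil => exact nodup_nil
  | cons x xs ih =>
    refine nodup_cons.2 ⟨fun hx => ?_, ih hl.tail⟩
    obtain ⟨s, t, rfl⟩ := append_of_mem hx
    exact hacyc (x :: s ++ [x]) (hl.prefix ⟨t, by simp⟩) (by simp)
      (by rw [getLast?_concat]; rfl)

variable [DecidableEq α] {v x : α} {l l₁ l₂ A₁ A₂ B₁ B₂ : List α}

theorem mem_take_idxOf_iff : x ∈ l.take (l.idxOf v) ↔ x ∈ l ∧ l.idxOf x < l.idxOf v := by
  constructor
  · intro hx
    have hxl : x ∈ l := mem_of_mem_take hx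
    refine ⟨hxl, ?_⟩
    have h := idxOf_append_of_mem (l₂ := l.drop (l.idxOf v)) hx
    rw [take_append_drop] at h
    exact h ▸ (idxOf_lt_length_iff.2 hx).trans_le (length_take_le _ _)
  · rintro ⟨hxl, hlt⟩
    rw [mem_take_iff_getElem]
    exact ⟨l.idxOf x, by simp [hlt, idxOf_lt_length_iff.2 hxl], getElem_idxOf _⟩

theorem idxOf_append_cons (h : v ∉ l₁) : (l₁ ++ v :: l₂).idxOf v = l₁.length := by
  simp [idxOf_append_of_notMem h]

def spliceAt (v : α) (l₁ l₂ : List α) : List α :=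
  l₁.take (l₁.idxOf v + 1) ++ l₂.drop (l₂.idxOf v + 1)

theorem spliceAt_append_cons (h₁ : v ∉ A₁) (h₂ : v ∉ A₂) :
    spliceAt v (A₁ ++ v :: B₁) (A₂ ++ v :: B₂) = A₁ ++ v :: B₂ := by
  simp [spliceAt, idxOf_append_cons h₁, idxOf_append_cons h₂, take_append]

theorem spliceAt_self : spliceAt v l l = l := take_append_drop _ _

theorem mem_of_mem_spliceAt (h : x ∈ spliceAt v l₁ l₂) :
    x ∈ l₁ ∨ x ∈ l₂.drop (l₂.idxOf v + 1) :=
  (mem_append.1 h).imp_left mem_of_mem_take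

theorem mem_spliceAt_self (h₁ : v ∈ l₁) (h₂ : v ∈ l₂) : v ∈ spliceAt v l₁ l₂ := by
  obtain ⟨A₁, B₁, rfl, hA₁⟩ := eq_append_cons_of_mem h₁
  obtain ⟨A₂, B₂, rfl, hA₂⟩ := eq_append_cons_of_mem h₂
  simp [spliceAt_append_cons hA₁ hA₂]

theorem take_idxOf_spliceAt (h₁ : v ∈ l₁) (h₂ : v ∈ l₂) :
    (spliceAt v l₁ l₂).take ((spliceAt v l₁ l₂).idxOf v) = l₁.take (l₁.idxOf v) := by
  obtain ⟨A₁, B₁, rfl, hA₁⟩ := eq_append_cons_of_mem h₁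
  obtain ⟨A₂, B₂, rfl, hA₂⟩ := eq_append_cons_of_mem h₂
  simp [spliceAt_append_cons hA₁ hA₂, idxOf_append_cons hA₁]

theorem spliceAt_spliceAt (h₁ : v ∈ l₁) (h₂ : v ∈ l₂) :
    spliceAt v (spliceAt v l₁ l₂) (spliceAt v l₂ l₁) = l₁ := by
  obtain ⟨A₁, B₁, rfl, hA₁⟩ := eq_append_cons_of_mem h₁
  obtain ⟨A₂, B₂, rfl, hA₂⟩ := eq_append_cons_of_mem h₂
  simp only [spliceAt_append_cons hA₁ hA₂, spliceAt_append_cons hA₂ hA₁]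

theorem head?_spliceAt (h₁ : v ∈ l₁) (h₂ : v ∈ l₂) :
    (spliceAt v l₁ l₂).head? = l₁.head? := by
  obtain ⟨A₁, B₁, rfl, hA₁⟩ := eq_append_cons_of_mem h₁
  obtain ⟨A₂, B₂, rfl, hA₂⟩ := eq_append_cons_of_mem h₂
  rw [spliceAt_append_cons hA₁ hA₂]
  cases A₁ <;> rfl

theorem getLast?_spliceAt (h₁ : v ∈ l₁) (h₂ : v ∈ l₂) :
    (spliceAt v l₁ l₂).getLast? = l₂.getLast? := by
  obtain ⟨A₁, B₁, rfl, hA₁⟩ := eq_append_cons_of_mem h₁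
  obtain ⟨A₂, B₂, rfl, hA₂⟩ := eq_append_cons_of_mem h₂
  simp only [spliceAt_append_cons hA₁ hA₂, getLast?_append_cons]

theorem IsChain.spliceAt {R : α → α → Prop} (h₁ : v ∈ l₁) (h₂ : v ∈ l₂)
    (c₁ : l₁.IsChain R) (c₂ : l₂.IsChain R) : (spliceAt v l₁ l₂).IsChain R := by
  obtain ⟨A₁, B₁, rfl, hA₁⟩ := eq_append_cons_of_mem h₁
  obtain ⟨A₂, B₂, rfl, hA₂⟩ := eq_append_cons_of_mem h₂
  rw [spliceAt_append_cons hA₁ hA₂, ← singleton_append, ← append_assoc]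
  refine IsChain.append_overlap ?_ ?_ (cons_ne_nil v [])
  · exact c₁.prefix ⟨B₁, by simp⟩
  · exact c₂.suffix ⟨A₂, by simp⟩

end List

open List

section pathWeight

variable {V R : Type*} [CommRing R] {w : V → V → R}

theorem pathWeight_cons_cons (x y : V) (l : List V) :
    pathWeight w (x :: y :: l) = w x y * pathWeight w (y :: l) := by
  simp [pathWeight]

theorem pathWeight_append_cons (v : V) :
    ∀ A B : List V, pathWeight w (A ++ v :: B) = pathWeight w (A ++ [v]) * pathWeight w (v :: B)
  | [], B => by simp [pathWeight]
  | [x], B => by simp [pathWeight]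
  | x :: y :: A, B => by
    simp only [cons_append, pathWeight_cons_cons]
    rw [← cons_append, pathWeight_append_cons v (y :: A) B, cons_append, mul_assoc]

theorem pathWeight_spliceAt_mul [DecidableEq V] {v : V} {l₁ l₂ : List V}
    (h₁ : v ∈ l₁) (h₂ : v ∈ l₂) :
    pathWeight w (spliceAt v l₁ l₂) * pathWeight w (spliceAt v l₂ l₁)
      = pathWeight w l₁ * pathWeight w l₂ := by
  obtain ⟨A₁, B₁, rfl, hA₁⟩ := eq_append_cons_of_mem h₁
  obtain ⟨A₂, B₂, rfl, hA₂⟩ := eq_append_cons_of_mem h₂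
  rw [spliceAt_append_cons hA₁ hA₂, spliceAt_append_cons hA₂ hA₁, pathWeight_append_cons v A₁ B₂,
    pathWeight_append_cons v A₂ B₁, pathWeight_append_cons v A₁ B₁, pathWeight_append_cons v A₂ B₂]
  ring

end pathWeight

section IsDirPath

variable {V : Type*} {E : V → V → Prop}

theorem IsDirPath.spliceAt [DecidableEq V] {v u₁ v₁ u₂ v₂ : V} {l₁ l₂ : List V}
    (p₁ : IsDirPath E u₁ v₁ l₁) (p₂ : IsDirPath E u₂ v₂ l₂) (h₁ : v ∈ l₁) (h₂ : v ∈ l₂) :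
    IsDirPath E u₁ v₂ (spliceAt v l₁ l₂) :=
  ⟨p₁.1.spliceAt h₁ h₂ p₂.1, (head?_spliceAt h₁ h₂).trans p₁.2.1,
    (getLast?_spliceAt h₁ h₂).trans p₂.2.2⟩

theorem finite_setOf_isDirPath [Fintype V] (hnd : ∀ l : List V, l.IsChain E → l.Nodup)
    (u v : V) : {l | IsDirPath E u v l}.Finite :=
  (List.finite_length_le V (Fintype.card V)).subset fun l hl => (hnd l hl.1).length_le_card

end IsDirPath

section Crossing

variable {V ι : Type*} [DecidableEq V] [LinearOrder ι] {P : ι → List V}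

structure FirstCrossing (P : ι → List V) where
  i : ι
  j : ι
  v : V
  j_ne_i : j ≠ i
  mem_i : v ∈ P i
  mem_j : v ∈ P j
  disjoint_of_lt : ∀ i' < i, ∀ j', j' ≠ i' → (P i').Disjoint (P j')
  not_mem_of_mem_take : ∀ x ∈ (P i).take ((P i).idxOf v), ∀ j', j' ≠ i → x ∉ P j'
  le_of_mem : ∀ j', j' ≠ i → v ∈ P j' → j ≤ j'

theorem FirstCrossing.nonempty_of_not_pairwise_disjoint [WellFoundedLT ι]
    (h : ¬ ∀ i j, i ≠ j → (P i).Disjoint (P j)) : Nonempty (FirstCrossing P) := by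
  obtain ⟨i₀, j₀, hij₀, hd₀⟩ : ∃ i j, i ≠ j ∧ ¬ (P i).Disjoint (P j) := by simpa using h
  obtain ⟨i, ⟨j₁, hj₁, hd₁⟩, hi⟩ := wellFounded_lt.has_min
    {i | ∃ j, j ≠ i ∧ ¬ (P i).Disjoint (P j)} ⟨i₀, j₀, hij₀.symm, hd₀⟩
  obtain ⟨x, hxi, hxj₁⟩ : ∃ x, x ∈ P i ∧ x ∈ P j₁ := by
    by_contra! hx
    exact hd₁ fun x => hx x
  obtain ⟨v, ⟨hvi, j₂, hj₂, hvj₂⟩, hv⟩ := (InvImage.wf (P i).idxOf wellFounded_lt).has_min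
    {x | x ∈ P i ∧ ∃ j, j ≠ i ∧ x ∈ P j} ⟨x, hxi, j₁, hj₁, hxj₁⟩
  obtain ⟨j, ⟨hji, hvj⟩, hj⟩ := wellFounded_lt.has_min {j | j ≠ i ∧ v ∈ P j} ⟨j₂, hj₂, hvj₂⟩
  exact ⟨{ i, j, v
           j_ne_i := hji
           mem_i := hvi
           mem_j := hvj
           disjoint_of_lt := fun i' hi' j' hj' => not_not.1 fun hd => hi i' ⟨j', hj', hd⟩ hi'
           not_mem_of_mem_take := fun x hx j' hj' hxj' =>
             hv x ⟨(mem_take_idxOf_iff.1 hx).1, j', hj', hxj'⟩ (mem_take_idxOf_iff.1 hx).2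
           le_of_mem := fun j' hj' hvj' => not_lt.1 (hj j' ⟨hj', hvj'⟩) }⟩

instance : Subsingleton (FirstCrossing P) where
  allEq c d := by
    obtain ⟨i, j, v, hji, hvi, hvj, hi, hv, hj⟩ := c
    obtain ⟨i', j', v', hji', hvi', hvj', hi', hv', hj'⟩ := d
    obtain rfl : i = i' := le_antisymm (not_lt.1 fun h => hi i' h j' hji' hvi' hvj')
      (not_lt.1 fun h => hi' i h j hji hvi hvj)
    obtain rfl : v = v' := (idxOf_inj hvi).1 <| le_antisymm
      (not_lt.1 fun h => hv v' (mem_take_idxOf_iff.2 ⟨hvi', h⟩) j' hji' hvj')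
      (not_lt.1 fun h => hv' v (mem_take_idxOf_iff.2 ⟨hvi, h⟩) j hji hvj)
    obtain rfl : j = j' := le_antisymm (hj j' hji' hvj') (hj' j hji hvj)
    rfl

namespace FirstCrossing

theorem not_pairwise_disjoint (c : FirstCrossing P) : ¬ ∀ i j, i ≠ j → (P i).Disjoint (P j) :=
  fun h => h c.i c.j c.j_ne_i.symm c.mem_i c.mem_j

variable (c : FirstCrossing P)

theorem i_lt_j : c.i < c.j :=
  lt_of_le_of_ne (not_lt.1 fun h => c.disjoint_of_lt c.j h c.i c.j_ne_i.symm c.mem_j c.mem_i)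
    c.j_ne_i.symm

theorem v_mem_of_eq_or_eq {t : ι} (ht : t = c.i ∨ t = c.j) : c.v ∈ P t := by
  obtain rfl | rfl := ht
  exacts [c.mem_i, c.mem_j]

def switch (t : ι) : List V :=
  spliceAt c.v (P t) (P (swap c.i c.j t))

theorem switch_i : c.switch c.i = spliceAt c.v (P c.i) (P c.j) := by
  rw [switch, swap_apply_left]

theorem switch_j : c.switch c.j = spliceAt c.v (P c.j) (P c.i) := by
  rw [switch, swap_apply_right]

theorem switch_of_ne {t : ι} (hi : t ≠ c.i) (hj : t ≠ c.j) : c.switch t = P t := by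
  rw [switch, swap_apply_of_ne_of_ne hi hj, spliceAt_self]

/-- `P i` must be simple: its vertices before `v` must not reappear on its tail, which becomes
the tail of the new `P j`. -/
def ofSwitch (hnd : (P c.i).Nodup) : FirstCrossing c.switch where
  i := c.i
  j := c.j
  v := c.v
  j_ne_i := c.j_ne_i
  mem_i := c.switch_i ▸ mem_spliceAt_self c.mem_i c.mem_j
  mem_j := c.switch_j ▸ mem_spliceAt_self c.mem_j c.mem_i
  disjoint_of_lt i' hi' j' hj' x hxi' hxj' := by
    have hi'i : i' ≠ c.i := hi'.ne
    have hi'j : i' ≠ c.j := (hi'.trans c.i_lt_j).ne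
    rw [c.switch_of_ne hi'i hi'j] at hxi'
    rcases mem_of_mem_spliceAt hxj' with h | h
    · exact c.disjoint_of_lt i' hi' j' hj' hxi' h
    · refine c.disjoint_of_lt i' hi' _ (fun h' => hj' ?_) hxi' (mem_of_mem_drop h)
      exact (swap c.i c.j).injective (h'.trans (swap_apply_of_ne_of_ne hi'i hi'j).symm)
  not_mem_of_mem_take x hx j' hj' hxj' := by
    rw [c.switch_i, take_idxOf_spliceAt c.mem_i c.mem_j] at hx
    by_cases hjj : j' = c.j
    · rw [hjj, c.switch_j] at hxj'
      rcases mem_of_mem_spliceAt hxj' with h | h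
      · exact c.not_mem_of_mem_take x hx c.j c.j_ne_i h
      · exact disjoint_take_drop hnd (Nat.le_succ _) hx h
    · rw [c.switch_of_ne hj' hjj] at hxj'
      exact c.not_mem_of_mem_take x hx j' hj' hxj'
  le_of_mem j' hj' hvj' := by
    by_cases hjj : j' = c.j
    · exact hjj.ge
    · rw [c.switch_of_ne hj' hjj] at hvj'
      exact c.le_of_mem j' hj' hvj'

theorem switch_ofSwitch (hnd : (P c.i).Nodup) : (c.ofSwitch hnd).switch = P := by
  funext t
  by_cases ht : t = c.i ∨ t = c.j
  · change spliceAt c.v (c.switch t) (c.switch (swap c.i c.j t)) = P t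
    obtain rfl | rfl := ht
    · rw [swap_apply_left, c.switch_i, c.switch_j, spliceAt_spliceAt c.mem_i c.mem_j]
    · rw [swap_apply_right, c.switch_i, c.switch_j, spliceAt_spliceAt c.mem_j c.mem_i]
  · rw [not_or] at ht
    exact ((c.ofSwitch hnd).switch_of_ne ht.1 ht.2).trans (c.switch_of_ne ht.1 ht.2)

theorem switch_switch (σ : Perm ι) (hnd : (P c.i).Nodup) (d : FirstCrossing c.switch) :
    (⟨σ * swap c.i c.j * swap d.i d.j, d.switch⟩ : (_ : Perm ι) × (ι → List V)) = ⟨σ, P⟩ := by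
  rw [Subsingleton.elim d (c.ofSwitch hnd)]
  change (⟨σ * swap c.i c.j * swap c.i c.j, _⟩ : (_ : Perm ι) × (ι → List V)) = _
  rw [mul_assoc, swap_mul_self, mul_one, c.switch_ofSwitch]

theorem isDirPath_switch {E : V → V → Prop} {a b : ι → V} {σ : Perm ι}
    (hP : ∀ t, IsDirPath E (a t) (b (σ t)) (P t)) (t : ι) :
    IsDirPath E (a t) (b ((σ * swap c.i c.j) t)) (c.switch t) := by
  by_cases ht : t = c.i ∨ t = c.j
  · refine (hP t).spliceAt (hP _) (c.v_mem_of_eq_or_eq ht) (c.v_mem_of_eq_or_eq ?_)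
    obtain rfl | rfl := ht <;> simp
  · rw [not_or] at ht
    rw [c.switch_of_ne ht.1 ht.2, Perm.mul_apply, swap_apply_of_ne_of_ne ht.1 ht.2]
    exact hP t

theorem prod_pathWeight_switch [Fintype ι] {R : Type*} [CommRing R] (w : V → V → R) :
    ∏ t, pathWeight w (c.switch t) = ∏ t, pathWeight w (P t) := by
  have split : ∀ Q : ι → List V, ∏ t, pathWeight w (Q t) =
      pathWeight w (Q c.i) * pathWeight w (Q c.j) * ∏ t ∈ {c.i, c.j}ᶜ, pathWeight w (Q t) :=
    fun Q => by rw [← prod_mul_prod_compl {c.i, c.j}, prod_pair c.i_lt_j.ne]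
  rw [split, split P, c.switch_i, c.switch_j, pathWeight_spliceAt_mul c.mem_i c.mem_j]
  refine congrArg _ (prod_congr rfl fun t ht => ?_)
  simp only [mem_compl, mem_insert, Finset.mem_singleton, not_or] at ht
  rw [c.switch_of_ne ht.1 ht.2]

end FirstCrossing

end Crossing

theorem finsum_subtype_eq_sum {α M : Type*} [AddCommMonoid M] {p : α → Prop} (s : Finset α)
    (hs : ∀ x, x ∈ s ↔ p x) (f : α → M) : ∑ᶠ x : {x // p x}, f x = ∑ x ∈ s, f x := by
  have hset : {x | p x} = (s : Set α) := Set.ext fun x => (hs x).symm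
  exact (finsum_set_coe_eq_finsum_mem {x | p x}).trans (hset ▸ finsum_mem_coe_finset f s)

theorem Matrix.det_of_sum_eq_sum_piFinset {ι α R : Type*} [Fintype ι] [DecidableEq ι] [CommRing R]
    (s : ι → ι → Finset α) (f : α → R) :
    (Matrix.of fun i j => ∑ x ∈ s i j, f x).det =
      ∑ σ : Perm ι, (Perm.sign σ : ℤ) •
        ∑ P ∈ Fintype.piFinset fun i => s i (σ i), ∏ i, f (P i) := by
  rw [← Matrix.det_transpose, Matrix.det_apply]
  refine sum_congr rfl fun σ _ => ?_
  rw [← prod_univ_sum]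
  rfl

theorem sum_sign_smul_sum_crossing_eq_zero {V ι R : Type*} [DecidableEq V] [Fintype ι]
    [LinearOrder ι] [CommRing R] {E : V → V → Prop} (hnd : ∀ l : List V, l.IsChain E → l.Nodup)
    (w : V → V → R) (a b : ι → V) (F : Perm ι → Finset (ι → List V))
    (hF : ∀ σ P, P ∈ F σ ↔ (∀ i, IsDirPath E (a i) (b (σ i)) (P i)) ∧
      ¬ ∀ i j, i ≠ j → (P i).Disjoint (P j)) :
    ∑ σ, (Perm.sign σ : ℤ) • ∑ P ∈ F σ, ∏ i, pathWeight w (P i) = 0 := by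
  simp_rw [Finset.smul_sum]
  rw [sum_sigma']
  have hmem : ∀ x ∈ univ.sigma F, (∀ i, IsDirPath E (a i) (b (x.1 i)) (x.2 i)) ∧
      ¬ ∀ i j, i ≠ j → (x.2 i).Disjoint (x.2 j) :=
    fun x hx => (hF _ _).1 (mem_sigma.1 hx).2
  let c : ∀ x ∈ univ.sigma F, FirstCrossing x.2 :=
    fun x hx => (FirstCrossing.nonempty_of_not_pairwise_disjoint (hmem x hx).2).some
  have hnd' : ∀ x (hx : x ∈ univ.sigma F), (x.2 (c x hx).i).Nodup :=
    fun x hx => hnd _ ((hmem x hx).1 _).1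
  refine sum_involution (fun x hx => ⟨x.1 * swap (c x hx).i (c x hx).j, (c x hx).switch⟩)
    (fun x hx => ?_) (fun x hx _ h => ?_) (fun x hx => ?_)
    (fun x hx => (c x hx).switch_switch _ (hnd' x hx) _)
  · rw [(c x hx).prod_pathWeight_switch, Perm.sign_mul, Perm.sign_swap (c x hx).j_ne_i.symm]
    simp
  · have hswap : swap (c x hx).i (c x hx).j = 1 := mul_eq_left.1 (congrArg Sigma.fst h)
    exact (c x hx).j_ne_i (swap_eq_one_iff.1 hswap).symm
  · exact mem_sigma.2 ⟨mem_univ _, (hF _ _).2 ⟨(c x hx).isDirPath_switch (hmem x hx).1,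
      ((c x hx).ofSwitch (hnd' x hx)).not_pairwise_disjoint⟩⟩

/-- Lindström–Gessel–Viennot: Let `Γ` be a finite directed acyclic graph
(vertices `V`, edge relation `E`), `R` a commutative ring and `w` an edge-weight function.
With `e(u,v) = Σ_{P : u → v} w(P)`, for vertices `a_1,…,a_n` and `b_1,…,b_n`,
`det (e(a_i, b_j)) = Σ_{σ ∈ S_n} sgn σ · Σ_{(P_1,…,P_n)} ∏_i w(P_i)`, the inner sum over
all `n`-tuples of pairwise vertex-disjoint paths with `P_i` from `a_i` to `b_{σ i}`. -/
theorem lindstrom_gessel_viennot {V R : Type*} [Fintype V] [CommRing R]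
    (E : V → V → Prop) (w : V → V → R)
    (hacyc : ∀ l : List V, l.Chain' E → 2 ≤ l.length → l.head? ≠ l.getLast?)
    (n : ℕ) (a b : Fin n → V) :
    (Matrix.of fun i j : Fin n =>
      ∑ᶠ p : {l : List V // IsDirPath E (a i) (b j) l}, pathWeight w p.1).det
    = ∑ σ : Equiv.Perm (Fin n), (Equiv.Perm.sign σ : ℤ) •
        ∑ᶠ P : {P : Fin n → List V //
            (∀ i, IsDirPath E (a i) (b (σ i)) (P i)) ∧
            ∀ i j, i ≠ j → (P i).Disjoint (P j)},
          ∏ i : Fin n, pathWeight w (P.1 i) := by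
  classical
  have hnd : ∀ l : List V, l.IsChain E → l.Nodup := fun l => IsChain.nodup_of_acyclic hacyc
  have hfin : ∀ u v, ∃ s : Finset (List V), ∀ l, l ∈ s ↔ IsDirPath E u v l :=
    fun u v => ⟨_, fun l => (finite_setOf_isDirPath hnd u v).mem_toFinset⟩
  choose paths hpaths using hfin
  simp only [finsum_subtype_eq_sum _ (hpaths _ _)]
  rw [Matrix.det_of_sum_eq_sum_piFinset]
  simp_rw [← sum_filter_not_add_sum_filter (Fintype.piFinset _)
    (fun P : Fin n → List V => ∀ i j, i ≠ j → (P i).Disjoint (P j)), smul_add, sum_add_distrib]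
  rw [sum_sign_smul_sum_crossing_eq_zero hnd w a b _
    (fun σ P => by simp [Fintype.mem_piFinset, hpaths]), zero_add]
  exact sum_congr rfl fun σ _ => congrArg _
    (finsum_subtype_eq_sum _ (fun P => by simp [Fintype.mem_piFinset, hpaths]) _).symm
end

section
/- Let R be a commutative ring and x_1, x_2, x_3, … elements of R. For all integers m ≥ 1 and n ≥ 1, the sum over all weakly increasing sequences 1 ≤ j_1 ≤ j_2 ≤ … ≤ j_{m−1} ≤ n of the products ∏_{k=1}^{m−1} (x_{j_k} − x_{j_k + k}) equals ∏_{t=n+1}^{m+n−1} (x_1 − x_t). (For m = 1 both sides are the empty product 1.) -/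
/-!
Splitting off the last entry `a` of a weakly increasing sequence with values in `[1, n]`
expresses the weighted sum for sequences of length `d + 1` as
`∑_{a=1}^{n} S_d(a) · (x_a − x_{a+d+1})`, where `S_d(a)` is the sum for length `d` and bound `a`.
Assuming `S_d(a) = ∏_{t=a+1}^{a+d} (x_1 − x_t)` by induction on `d`, this sum telescopes, because
`(x_1 − x_a) + (x_a − x_{a+d+1}) = x_1 − x_{a+d+1}` and the product for bound `0` contains the
factor `x_1 − x_1 = 0`.
-/

open Finset

theorem Fin.monotone_snoc_iff {α : Type*} [Preorder α] {n : ℕ} {f : Fin n → α} {a : α} :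
    Monotone (Fin.snoc f a : Fin (n + 1) → α) ↔ Monotone f ∧ ∀ i, f i ≤ a := by
  refine ⟨fun h => ⟨fun i j hij => ?_, fun i => ?_⟩, ?_⟩
  · simpa using h (Fin.castSucc_le_castSucc_iff.2 hij)
  · simpa using h (Fin.le_last i.castSucc)
  rintro ⟨hf, ha⟩ i j hij
  induction j using Fin.lastCases with
  | last => induction i using Fin.lastCases <;> simp [ha]
  | cast j =>
    induction i using Fin.lastCases with
    | last => exact absurd hij (not_le.2 (Fin.castSucc_lt_last j))
    | cast i => simpa using hf (Fin.castSucc_le_castSucc_iff.1 hij)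

namespace LatticePath

def monotoneSeqs (d n : ℕ) : Finset (Fin d → ℕ) :=
  {j ∈ Fintype.piFinset fun _ => Icc 1 n | Monotone j}

theorem mem_monotoneSeqs {d n : ℕ} {j : Fin d → ℕ} :
    j ∈ monotoneSeqs d n ↔ Monotone j ∧ ∀ k, 1 ≤ j k ∧ j k ≤ n := by
  simp [monotoneSeqs, and_comm]

theorem snoc_mem_monotoneSeqs_iff {d n a : ℕ} {g : Fin d → ℕ} :
    (Fin.snoc g a : Fin (d + 1) → ℕ) ∈ monotoneSeqs (d + 1) n ↔
      g ∈ monotoneSeqs d a ∧ a ∈ Icc 1 n := by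
  simp only [mem_monotoneSeqs, Fin.monotone_snoc_iff, Fin.forall_fin_succ', Fin.snoc_castSucc,
    Fin.snoc_last, mem_Icc]
  grind

theorem sum_monotoneSeqs_succ {M : Type*} [AddCommMonoid M] (d n : ℕ)
    (f : (Fin (d + 1) → ℕ) → M) :
    ∑ j ∈ monotoneSeqs (d + 1) n, f j =
      ∑ a ∈ Icc 1 n, ∑ g ∈ monotoneSeqs d a, f (Fin.snoc g a) := by
  rw [← sum_finset_product' ((monotoneSeqs (d + 1) n).map (Fin.snocEquiv _).symm.toEmbedding)]
  · rw [sum_map]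
    simp
  · rintro ⟨a, g⟩
    rw [mem_map_equiv, Equiv.symm_symm, and_comm]
    exact snoc_mem_monotoneSeqs_iff

variable {R : Type*} [CommRing R]

def pathWeight (x : ℕ → R) {d : ℕ} (j : Fin d → ℕ) : R :=
  ∏ k, (x (j k) - x (j k + ((k : ℕ) + 1)))

theorem pathWeight_snoc (x : ℕ → R) {d : ℕ} (g : Fin d → ℕ) (a : ℕ) :
    pathWeight x (Fin.snoc g a : Fin (d + 1) → ℕ) = pathWeight x g * (x a - x (a + (d + 1))) := by
  simp [pathWeight, Fin.prod_univ_castSucc]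

theorem prod_Icc_sub_add_prod_mul_sub (c : R) (x : ℕ → R) (n d : ℕ) :
    ∏ t ∈ Icc (n + 1) (n + (d + 1)), (c - x t) +
        (∏ t ∈ Icc (n + 1 + 1) (n + 1 + d), (c - x t)) * (x (n + 1) - x (n + 1 + (d + 1))) =
      ∏ t ∈ Icc (n + 1 + 1) (n + 1 + (d + 1)), (c - x t) := by
  rw [← insert_Icc_add_one_left_eq_Icc (by omega : n + 1 ≤ n + (d + 1)), prod_insert (by simp),
    show n + 1 + (d + 1) = n + 1 + d + 1 by ring, prod_Icc_succ_top (by omega),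
    show n + (d + 1) = n + 1 + d by ring]
  ring

theorem sum_pathWeight_monotoneSeqs (x : ℕ → R) (d n : ℕ) :
    ∑ j ∈ monotoneSeqs d n, pathWeight x j = ∏ t ∈ Icc (n + 1) (n + d), (x 1 - x t) := by
  induction d generalizing n with
  | zero => simp [monotoneSeqs, pathWeight, Subsingleton.monotone]
  | succ d ih =>
    simp_rw [sum_monotoneSeqs_succ, pathWeight_snoc, ← sum_mul, ih]
    induction n with
    | zero =>
      rw [Icc_eq_empty_of_lt zero_lt_one, sum_empty]
      exact (prod_eq_zero (i := 1) (by simp) (sub_self (x 1))).symm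
    | succ n ihn => rw [sum_Icc_succ_top (by omega), ihn, prod_Icc_sub_add_prod_mul_sub]

end LatticePath

open LatticePath in
theorem lattice_path_weight_sum_general {R : Type*} [CommRing R] (x : ℕ → R)
    (m n : ℕ) (hm : 1 ≤ m) :
    (∑ᶠ j : {j : Fin (m - 1) → ℕ // Monotone j ∧ ∀ k, 1 ≤ j k ∧ j k ≤ n},
      ∏ k : Fin (m - 1), (x (j.1 k) - x (j.1 k + ((k : ℕ) + 1))))
    = ∏ t ∈ Finset.Icc (n + 1) (m + n - 1), (x 1 - x t) := by
  calc _ = ∑ j ∈ monotoneSeqs (m - 1) n, pathWeight x j :=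
        (finsum_subtype_eq_finsum_cond (f := pathWeight x) _).trans
          (finsum_cond_eq_sum_of_cond_iff _ fun _ => mem_monotoneSeqs.symm)
    _ = _ := by rw [sum_pathWeight_monotoneSeqs, show n + (m - 1) = m + n - 1 by omega]

/-- For a commutative ring `R` and `x : ℕ → R` (indices 1-based),
for all `m, n ≥ 1`, the sum over all weakly increasing sequences
`1 ≤ j_1 ≤ … ≤ j_{m-1} ≤ n` of `∏_{k=1}^{m-1} (x_{j_k} - x_{j_k + k})`
equals `∏_{t=n+1}^{m+n-1} (x_1 - x_t)`. -/
theorem lattice_path_weight_sum {R : Type*} [CommRing R] (x : ℕ → R)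
    (m n : ℕ) (hm : 1 ≤ m) (hn : 1 ≤ n) :
    (∑ᶠ j : {j : Fin (m - 1) → ℕ // Monotone j ∧ ∀ k, 1 ≤ j k ∧ j k ≤ n},
      ∏ k : Fin (m - 1), (x (j.1 k) - x (j.1 k + ((k : ℕ) + 1))))
    = ∏ t ∈ Finset.Icc (n + 1) (m + n - 1), (x 1 - x t) :=
  lattice_path_weight_sum_general x m n hm
end

section
/- Let R be a commutative ring, n ≥ 1 an integer, and x_1, …, x_n elements of R; extend the sequence by setting x_s = 0 for all s > n. For all integers m ≥ 1 and 1 ≤ t ≤ n, the sum over all weakly increasing sequences t ≤ j_1 ≤ j_2 ≤ … ≤ j_{m−1} ≤ n of the products ∏_{k=1}^{m−1} (x_{j_k} − x_{j_k + k}) equals x_t^{m−1}, where x_{j_k + k} is interpreted as 0 whenever j_k + k > n. -/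
open Finset

section aux

variable {R : Type*} [CommRing R]

/-- Truncated complete homogeneous sum: `hh x M a b = ∑_{a ≤ i₁ ≤ … ≤ i_M ≤ b} ∏ x_{i_k}`,
defined by recursion on the first index. -/
def hh (x : ℕ → R) : ℕ → ℕ → ℕ → R
  | 0, _, _ => 1
  | (M+1), a, b => ∑ s ∈ Finset.Icc a b, x s * hh x M s b

lemma hh_of_lt (x : ℕ → R) {M a b : ℕ} (h : b < a) : hh x (M+1) a b = 0 := by
  simp [hh, Finset.Icc_eq_empty_of_lt h]

lemma hh_vanish (x : ℕ → R) (n : ℕ) (hx : ∀ s, n < s → x s = 0) {M a : ℕ} (b : ℕ)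
    (ha : n < a) : hh x (M+1) a b = 0 := by
  simp only [hh]
  refine Finset.sum_eq_zero fun s hs => ?_
  rw [hx s (by have := (Finset.mem_Icc.mp hs).1; omega), zero_mul]

lemma Icc_insert {a b : ℕ} (h : a ≤ b) :
    Finset.Icc a b = insert a (Finset.Icc (a+1) b) := by
  ext s; simp only [Finset.mem_Icc, Finset.mem_insert]; omega

lemma Icc_insert' {a b : ℕ} (h : a ≤ b + 1) :
    Finset.Icc a (b+1) = insert (b+1) (Finset.Icc a b) := by
  ext s; simp only [Finset.mem_Icc, Finset.mem_insert]; omega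

lemma hhA (x : ℕ → R) {M a b : ℕ} (h : a ≤ b) :
    hh x (M+1) a b = x a * hh x M a b + hh x (M+1) (a+1) b := by
  show (∑ s ∈ Finset.Icc a b, x s * hh x M s b) = _
  rw [Icc_insert h, Finset.sum_insert (by simp)]
  rfl

lemma hhB (x : ℕ → R) {M a b : ℕ} (h : a ≤ b + 1) :
    hh x (M+1) a (b+1) = x (b+1) * hh x M a (b+1) + hh x (M+1) a b := by
  induction M generalizing a with
  | zero =>
    show (∑ s ∈ Finset.Icc a (b+1), x s * 1) = x (b+1) * 1 + ∑ s ∈ Finset.Icc a b, x s * 1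
    rw [Icc_insert' h, Finset.sum_insert (by simp)]
  | succ M ih =>
    show (∑ s ∈ Finset.Icc a (b+1), x s * hh x (M+1) s (b+1)) = _
    have e : ∀ s ∈ Finset.Icc a (b+1), x s * hh x (M+1) s (b+1)
        = x (b+1) * (x s * hh x M s (b+1)) + x s * hh x (M+1) s b := by
      intro s hs
      rw [ih (Finset.mem_Icc.mp hs).2]; ring
    rw [Finset.sum_congr rfl e, Finset.sum_add_distrib, ← Finset.mul_sum]
    have e2 : ∑ s ∈ Finset.Icc a (b+1), x s * hh x (M+1) s b
        = ∑ s ∈ Finset.Icc a b, x s * hh x (M+1) s b := by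
      rw [Icc_insert' h, Finset.sum_insert (by simp),
        hh_of_lt x (by omega), mul_zero, zero_add]
    rw [e2]; rfl

lemma key (x : ℕ → R) (M s c : ℕ) :
    (x s - x (s+c+1)) * hh x M s (s+c+1)
      = hh x (M+1) s (s+c) - hh x (M+1) (s+1) (s+c+1) := by
  have h1 := hhA x (M := M) (a := s) (b := s+c+1) (by omega)
  have h2 := hhB x (M := M) (a := s) (b := s+c) (by omega)
  linear_combination h2 - h1

lemma telescope (g : ℕ → R) : ∀ {a b : ℕ}, a ≤ b + 1 →
    (∑ s ∈ Finset.Icc a b, (g s - g (s+1))) = g a - g (b+1) := by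
  intro a b
  induction b generalizing a with
  | zero =>
    intro h
    interval_cases a <;> simp
  | succ b ih =>
    intro h
    rcases Nat.lt_or_ge b (a - 1) with h' | h'
    · have : a = b + 2 := by omega
      subst this
      rw [Finset.Icc_eq_empty_of_lt (by omega), Finset.sum_empty, sub_self]
    · rw [Icc_insert' (by omega), Finset.sum_insert (by simp), ih (by omega)]
      ring

lemma hh_self (x : ℕ → R) (M a : ℕ) : hh x M a a = x a ^ M := by
  induction M with
  | zero => simp [hh]
  | succ M ih =>
    show (∑ s ∈ Finset.Icc a a, x s * hh x M s a) = _
    rw [Finset.Icc_self, Finset.sum_singleton, ih, pow_succ]; ring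

/-- The lattice path weight sum, by recursion on the first step. -/
def FF (x : ℕ → R) (n : ℕ) : ℕ → ℕ → ℕ → R
  | 0, _, _ => 1
  | (M+1), c, a => ∑ s ∈ Finset.Icc a n, (x s - x (s+c+1)) * FF x n M (c+1) s

lemma FF_eq (x : ℕ → R) (n : ℕ) (hx : ∀ s, n < s → x s = 0) :
    ∀ M c a, a ≤ n + 1 → FF x n M c a = hh x M a (a+c) := by
  intro M
  induction M with
  | zero => intros; rfl
  | succ M ih =>
    intro c a ha
    show (∑ s ∈ Finset.Icc a n, (x s - x (s+c+1)) * FF x n M (c+1) s) = _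
    have e : ∀ s ∈ Finset.Icc a n, (x s - x (s+c+1)) * FF x n M (c+1) s
        = hh x (M+1) s (s+c) - hh x (M+1) (s+1) (s+1+c) := by
      intro s hs
      rw [ih (c+1) s (by have := (Finset.mem_Icc.mp hs).2; omega),
        show s + (c+1) = s + c + 1 by omega,
        show s + 1 + c = s + c + 1 by omega]
      exact key x M s c
    refine (Finset.sum_congr rfl e).trans
      ((telescope (fun s => hh x (M+1) s (s+c)) ha).trans ?_)
    show hh x (M+1) a (a+c) - hh x (M+1) (n+1) (n+1+c) = hh x (M+1) a (a+c)
    rw [hh_vanish x n hx (a := n+1) (n+1+c) (by omega), sub_zero]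

open scoped Classical in
/-- Finset of monotone sequences with entries in `[a, n]`. -/
noncomputable def TT (n M a : ℕ) : Finset (Fin M → ℕ) :=
  (Fintype.piFinset fun _ => Finset.Icc a n).filter fun j => Monotone j

lemma mem_TT {n M a : ℕ} {j : Fin M → ℕ} :
    j ∈ TT n M a ↔ Monotone j ∧ ∀ k, a ≤ j k ∧ j k ≤ n := by
  simp only [TT, Finset.mem_filter, Fintype.mem_piFinset, Finset.mem_Icc]
  tauto

lemma finsum_cond_congr {α : Type*} {p q : α → Prop} (h : ∀ a, p a ↔ q a) (f : α → R) :
    (∑ᶠ (j) (_ : p j), f j) = ∑ᶠ (j) (_ : q j), f j := by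
  refine finsum_congr fun j => ?_
  rw [propext (h j)]

lemma finsum_eq_TT (n M a : ℕ) (f : (Fin M → ℕ) → R) :
    (∑ᶠ j : {j : Fin M → ℕ // Monotone j ∧ ∀ k, a ≤ j k ∧ j k ≤ n}, f j.1)
      = ∑ j ∈ TT n M a, f j := by
  rw [finsum_subtype_eq_finsum_cond, ← finsum_mem_coe_finset]
  exact finsum_cond_congr (fun j => by simp [mem_TT]) f

lemma mono_cons {M s : ℕ} {j : Fin M → ℕ} (hj : Monotone j) (h : ∀ k, s ≤ j k) :
    Monotone (Fin.cons s j : Fin (M+1) → ℕ) := by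
  intro u v huv
  induction u using Fin.cases with
  | zero =>
    induction v using Fin.cases with
    | zero => exact le_refl _
    | succ v => simpa using h v
  | succ u =>
    induction v using Fin.cases with
    | zero => exact absurd huv (by simp [Fin.le_def])
    | succ v =>
      simp only [Fin.cons_succ]
      exact hj (by rwa [Fin.succ_le_succ_iff] at huv)

lemma sum_TT_succ (x : ℕ → R) (n M c a : ℕ) :
    (∑ j ∈ TT n (M+1) a, ∏ k : Fin (M+1), (x (j k) - x (j k + c + ((k : ℕ)+1))))
    = ∑ s ∈ Finset.Icc a n, (x s - x (s+c+1)) *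
        ∑ j ∈ TT n M s, ∏ k : Fin M, (x (j k) - x (j k + (c+1) + ((k : ℕ)+1))) := by
  simp only [Finset.mul_sum]
  rw [Finset.sum_sigma']
  refine (Finset.sum_nbij' (fun j => (⟨j 0, Fin.tail j⟩ : Σ _ : ℕ, Fin M → ℕ))
    (fun p => Fin.cons p.1 p.2) ?_ ?_ ?_ ?_ ?_).symm.symm
  · intro j hj
    obtain ⟨hmono, hb⟩ := mem_TT.mp hj
    simp only [Finset.mem_sigma, Finset.mem_Icc, mem_TT]
    refine ⟨⟨(hb 0).1, (hb 0).2⟩, fun u v huv => hmono (Fin.succ_le_succ_iff.mpr huv), fun k => ?_⟩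
    exact ⟨hmono (Fin.zero_le k.succ), (hb k.succ).2⟩
  · intro p hp
    simp only [Finset.mem_sigma, Finset.mem_Icc, mem_TT] at hp
    obtain ⟨⟨has, hsn⟩, hmono, hb⟩ := hp
    refine mem_TT.mpr ⟨mono_cons hmono (fun k => (hb k).1), fun k => ?_⟩
    induction k using Fin.cases with
    | zero => simpa using ⟨has, hsn⟩
    | succ k => simpa using ⟨le_trans has (hb k).1, (hb k).2⟩
  · intro j hj
    exact Fin.cons_self_tail j
  · intro p hp
    ext <;> simp
  · intro j hj
    rw [Fin.prod_univ_succ]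
    simp only [Fin.val_succ, Fin.val_zero, Fin.tail]
    congr 1
    refine Finset.prod_congr rfl fun k _ => ?_
    congr 2
    omega

lemma sum_TT (x : ℕ → R) (n : ℕ) :
    ∀ M c a, (∑ j ∈ TT n M a, ∏ k : Fin M, (x (j k) - x (j k + c + ((k : ℕ)+1))))
      = FF x n M c a := by
  intro M
  induction M with
  | zero =>
    intro c a
    have h1 : TT n 0 a = {(fun k => k.elim0 : Fin 0 → ℕ)} := by
      ext j
      simp only [mem_TT, Finset.mem_singleton]
      constructor
      · intro _; exact funext fun k => k.elim0
      · intro _; exact ⟨fun u => u.elim0, fun k => k.elim0⟩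
    rw [h1, Finset.sum_singleton]
    simp [FF]
  | succ M ih =>
    intro c a
    rw [sum_TT_succ]
    show _ = ∑ s ∈ Finset.Icc a n, (x s - x (s+c+1)) * FF x n M (c+1) s
    exact Finset.sum_congr rfl fun s _ => by rw [ih (c+1) s]

end aux

/-- For a commutative ring `R`, `n ≥ 1`, and `x : ℕ → R` (indices 1-based)
with `x s = 0` for all `s > n`, for all `m ≥ 1` and `1 ≤ t ≤ n`, the sum over all weakly
increasing sequences `t ≤ j_1 ≤ … ≤ j_{m-1} ≤ n` of `∏_{k=1}^{m-1} (x_{j_k} - x_{j_k + k})`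
equals `x_t ^ (m-1)`. -/
theorem lattice_path_weight_sum_truncated {R : Type*} [CommRing R] (n : ℕ) (hn : 1 ≤ n)
    (x : ℕ → R) (hx : ∀ s, n < s → x s = 0)
    (m t : ℕ) (hm : 1 ≤ m) (ht1 : 1 ≤ t) (ht2 : t ≤ n) :
    (∑ᶠ j : {j : Fin (m - 1) → ℕ // Monotone j ∧ ∀ k, t ≤ j k ∧ j k ≤ n},
      ∏ k : Fin (m - 1), (x (j.1 k) - x (j.1 k + ((k : ℕ) + 1))))
    = x t ^ (m - 1) := by
  rw [finsum_eq_TT n (m-1) t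
    (fun j => ∏ k : Fin (m-1), (x (j k) - x (j k + ((k : ℕ) + 1))))]
  have e : (∑ j ∈ TT n (m-1) t, ∏ k : Fin (m-1), (x (j k) - x (j k + ((k : ℕ) + 1))))
      = ∑ j ∈ TT n (m-1) t, ∏ k : Fin (m-1), (x (j k) - x (j k + 0 + ((k : ℕ) + 1))) := by
    refine Finset.sum_congr rfl fun j _ => Finset.prod_congr rfl fun k _ => ?_
    congr 2
  rw [e, sum_TT x n (m-1) 0 t, FF_eq x n hx (m-1) 0 t (by omega), Nat.add_zero,
    hh_self]
end

section
/- Let n ≥ 1 and let λ = (λ_1 ≥ λ_2 ≥ … ≥ λ_n ≥ 0) be a partition with at most n parts. Then, in the polynomial ring ℤ[x_1,…,x_n], the Schur polynomial satisfies S_λ(x_1,…,x_n) · det(x_i^{n−j})_{1≤i,j≤n} = det(x_i^{λ_j+n−j})_{1≤i,j≤n}. Equivalently, S_λ equals the quotient of the alternant det(x_i^{λ_j+n−j}) by the Vandermonde determinant det(x_i^{n−j}). -/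
/-- `T` is a semistandard Young tableau of shape `lam` (a partition with at most `n` parts,
rows and entries 0-indexed: `T i j` is the entry, in `{0,…,n-1}` standing for `{1,…,n}`,
in row `i`, column `j`): rows weakly increase and columns strictly increase. -/
def IsSSYT {n : ℕ} (lam : Fin n → ℕ) (T : ∀ i : Fin n, Fin (lam i) → Fin n) : Prop :=
  (∀ (i : Fin n) (j j' : Fin (lam i)), j ≤ j' → T i j ≤ T i j') ∧
  (∀ (i i' : Fin n) (j : Fin (lam i)) (j' : Fin (lam i')),
    i < i' → (j : ℕ) = (j' : ℕ) → T i j < T i' j')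

open MvPolynomial in
/-- The Schur polynomial `S_λ(x_1,…,x_n) = Σ_T x^T`, the sum over all semistandard Young
tableaux `T` of shape `λ` with entries in `{1,…,n}` of the product over the cells of `λ`
of the variable indexed by the entry. -/
noncomputable def schurPoly (n : ℕ) (lam : Fin n → ℕ) : MvPolynomial (Fin n) ℤ :=
  ∑ᶠ T : {T : ∀ i : Fin n, Fin (lam i) → Fin n // IsSSYT lam T},
    ∏ i : Fin n, ∏ j : Fin (lam i), X (T.1 i j)

/-!
Induction on the number of variables, through the branching rule. Deleting the entries `n` (the
largest ones) from an SSYT of shape `λ` leaves an SSYT of a shape `μ` with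
`λ_{j+1} ≤ μ_j ≤ λ_j`, and conversely the cells of `λ / μ` may be filled with `n` in exactly one
way, so `S_λ(x, t) = Σ_μ t^{|λ| - |μ|} S_μ(x)`. The alternant obeys the same rule: subtracting
`t^{λ_j - λ_{j+1} + 1}` times column `j + 1` from column `j` clears the row of `t` except for
`t^{λ_n}`, every other row acquires the factor `x_i - t`, and expanding the remaining geometric
sums column by column gives
`a_{λ+δ}(x, t) = t^{λ_n} ∏ (x_i - t) Σ_μ t^{|λ| - |μ| - λ_n} a_{μ+δ}(x)`. For `λ = 0` this is the
recursion of the Vandermonde determinant, so both sides of the theorem expand in the same way.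
-/

open MvPolynomial Finset

namespace Matrix

variable {R : Type*} [CommRing R]

theorem det_eq_of_forall_col_eq_smul_add_succ {n : ℕ}
    {A B : Matrix (Fin (n + 1)) (Fin (n + 1)) R} (c : Fin n → R)
    (A_last : ∀ i, A i (Fin.last n) = B i (Fin.last n))
    (A_castSucc : ∀ i (j : Fin n), A i j.castSucc = B i j.castSucc + c j * A i j.succ) :
    det A = det B := by
  rw [← det_submatrix_equiv_self Fin.revPerm A, ← det_submatrix_equiv_self Fin.revPerm B]
  refine det_eq_of_forall_col_eq_smul_add_pred (c ∘ Fin.rev) (fun i => by simpa using A_last _)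
    fun i j => ?_
  simpa [Fin.rev_succ, Fin.rev_castSucc] using A_castSucc (Fin.rev i) (Fin.rev j)

theorem det_succ_of_row_last_eq_zero {n : ℕ} (A : Matrix (Fin (n + 1)) (Fin (n + 1)) R)
    (h : ∀ j : Fin n, A (Fin.last n) j.castSucc = 0) :
    det A = A (Fin.last n) (Fin.last n) * det (A.submatrix Fin.castSucc Fin.castSucc) := by
  rw [det_succ_row A (Fin.last n), Fin.sum_univ_castSucc]
  simp [h, Fin.succAbove_last]

theorem det_of_col_sum {n : Type*} [Fintype n] [DecidableEq n] (s : n → Finset ℕ)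
    (f : n → ℕ → n → R) :
    det (of fun i j => ∑ m ∈ s j, f j m i) =
      ∑ r ∈ Fintype.piFinset s, det (of fun i j => f j (r j) i) := by
  rw [← det_transpose]
  have := (detRowAlternating : (n → R) [⋀^n]→ₗ[R] R).map_sum_finset (fun j m => f j m) s
  convert this using 1
  · congr 1
    ext j i
    simp
  · refine sum_congr rfl fun r _ => ?_
    rw [← det_transpose]
    rfl

end Matrix

theorem sub_mul_sum_Icc_pow {R : Type*} [CommRing R] (x t : R) (d : ℕ) {l u : ℕ} (h : l ≤ u) :
    (x - t) * ∑ m ∈ Icc l u, t ^ (u - m) * x ^ (m + d) =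
      x ^ (u + d + 1) - t ^ (u - l + 1) * x ^ (l + d) := by
  have hk : u + 1 - l = u - l + 1 := by omega
  rw [← Finset.Ico_add_one_right_eq_Icc, sum_Ico_eq_sum_range, hk]
  calc _ = x ^ (l + d) *
        ((∑ i ∈ range (u - l + 1), x ^ i * t ^ (u - l + 1 - 1 - i)) * (x - t)) := by
        rw [mul_sum, sum_mul, mul_sum]
        refine sum_congr rfl fun i hi => ?_
        have hi := mem_range.mp hi
        rw [show u - (l + i) = u - l + 1 - 1 - i by omega,
          show l + i + d = (l + d) + i by omega, pow_add]
        ring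
    _ = _ := by
        rw [geom_sum₂_mul, show u + d + 1 = (l + d) + (u - l + 1) by omega, pow_add]
        ring

section Interlacing

variable {n : ℕ} {lam : Fin (n + 1) → ℕ} {μ : Fin n → ℕ}

/-- The shapes `μ` for which `λ / μ` is a horizontal strip. -/
def interlacing (lam : Fin (n + 1) → ℕ) : Finset (Fin n → ℕ) :=
  Fintype.piFinset fun j => Icc (lam j.succ) (lam j.castSucc)

theorem mem_interlacing :
    μ ∈ interlacing lam ↔ ∀ j, lam j.succ ≤ μ j ∧ μ j ≤ lam j.castSucc := by
  simp [interlacing]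

theorem antitone_of_mem_interlacing (hlam : Antitone lam) (hμ : μ ∈ interlacing lam) :
    Antitone μ := by
  intro i i' hii'
  rcases hii'.eq_or_lt with rfl | hlt
  · exact le_rfl
  · exact ((mem_interlacing.1 hμ i').2.trans (hlam (Fin.succ_le_castSucc_iff.2 hlt))).trans
      (mem_interlacing.1 hμ i).1

end Interlacing

section Alternant

variable {S : Type*} [CommRing S]

/-- The alternant `a_{λ+δ}(x) = det (x_i ^ (λ_j + m - 1 - j))`, with `0`-based indices. -/
def alternant {m : ℕ} (x : Fin m → S) (lam : Fin m → ℕ) : S :=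
  (Matrix.of fun i j : Fin m => x i ^ (lam j + (m - 1 - (j : ℕ)))).det

theorem map_alternant {T F : Type*} [CommRing T] [FunLike F S T] [RingHomClass F S T] (f : F)
    {m : ℕ} (x : Fin m → S) (lam : Fin m → ℕ) :
    f (alternant x lam) = alternant (fun i => f (x i)) lam := by
  rw [alternant, ← RingHom.coe_coe f, RingHom.map_det]
  congr 1
  ext i j
  simp

theorem alternant_succ {n : ℕ} (x : Fin (n + 1) → S) {lam : Fin (n + 1) → ℕ}
    (hlam : Antitone lam) :
    alternant x lam = x (Fin.last n) ^ lam (Fin.last n) *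
      (∏ i : Fin n, (x i.castSucc - x (Fin.last n))) *
      ∑ μ ∈ interlacing lam, (∏ j, x (Fin.last n) ^ (lam j.castSucc - μ j)) *
        alternant (fun i => x i.castSucc) μ := by
  have hstep (j : Fin n) : lam j.succ ≤ lam j.castSucc := hlam (Fin.castSucc_le_succ j)
  -- subtracting `t ^ (λ_j - λ_{j+1} + 1)` times column `j + 1` from column `j`, where
  -- `t = x (Fin.last n)`, turns the last row into `(0, …, 0, t ^ λ_n)`
  set N : Matrix (Fin (n + 1)) (Fin (n + 1)) S := Matrix.of fun i j => Fin.lastCases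
    (x i ^ lam (Fin.last n)) (fun j => x i ^ (lam j.castSucc + (n - j)) -
      x (Fin.last n) ^ (lam j.castSucc - lam j.succ + 1) * x i ^ (lam j.succ + (n - 1 - j))) j
  have hcol : alternant x lam = N.det := by
    refine Matrix.det_eq_of_forall_col_eq_smul_add_succ
      (fun j => x (Fin.last n) ^ (lam j.castSucc - lam j.succ + 1)) (fun i => by simp [N])
      fun i j => ?_
    have : n - (j + 1) = n - 1 - j := by omega
    simp [N, this]
  have hrow (j : Fin n) : N (Fin.last n) j.castSucc = 0 := by
    have : lam j.castSucc + (n - j) =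
        lam j.castSucc - lam j.succ + 1 + (lam j.succ + (n - 1 - j)) := by
      have := hstep j
      omega
    simp only [N, Matrix.of_apply, Fin.lastCases_castSucc]
    rw [this, pow_add]
    ring
  have hsub : (N.submatrix Fin.castSucc Fin.castSucc).det =
      (∏ i : Fin n, (x i.castSucc - x (Fin.last n))) * (Matrix.of fun i j : Fin n =>
        ∑ m ∈ Icc (lam j.succ) (lam j.castSucc),
          x (Fin.last n) ^ (lam j.castSucc - m) * x i.castSucc ^ (m + (n - 1 - j))).det := by
    rw [← Matrix.det_mul_column]
    congr 1
    ext i j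
    simp only [Matrix.submatrix_apply, Matrix.of_apply]
    rw [sub_mul_sum_Icc_pow _ _ _ (hstep j),
      show lam j.castSucc + (n - 1 - j) + 1 = lam j.castSucc + (n - j) by omega]
    simp [N]
  have hcorner : N (Fin.last n) (Fin.last n) = x (Fin.last n) ^ lam (Fin.last n) := by simp [N]
  rw [hcol, N.det_succ_of_row_last_eq_zero hrow, hsub, hcorner, Matrix.det_of_col_sum,
    mul_assoc]
  congr 2
  refine sum_congr rfl fun μ _ => ?_
  rw [alternant, ← Matrix.det_mul_row]
  rfl

theorem alternant_zero_succ {n : ℕ} (x : Fin (n + 1) → S) :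
    alternant x 0 = (∏ i : Fin n, (x i.castSucc - x (Fin.last n))) *
      alternant (fun i => x i.castSucc) 0 := by
  have hzero : interlacing (0 : Fin (n + 1) → ℕ) = {0} := by
    ext μ
    simp [interlacing, funext_iff]
  rw [alternant_succ x (fun _ _ _ => le_rfl), hzero]
  simp

end Alternant

section Tableaux

abbrev Filling {m : ℕ} (lam : Fin m → ℕ) : Type := ∀ i : Fin m, Fin (lam i) → Fin m

open scoped Classical in
noncomputable def ssyt {m : ℕ} (lam : Fin m → ℕ) : Finset (Filling lam) :=
  univ.filter (IsSSYT lam)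

theorem mem_ssyt {m : ℕ} {lam : Fin m → ℕ} {T : Filling lam} :
    T ∈ ssyt lam ↔ IsSSYT lam T := by
  simp [ssyt]

noncomputable def Filling.weight {m : ℕ} {lam : Fin m → ℕ} (T : Filling lam) :
    MvPolynomial (Fin m) ℤ :=
  ∏ i, ∏ j, X (T i j)

theorem schurPoly_eq_sum_ssyt (m : ℕ) (lam : Fin m → ℕ) :
    schurPoly m lam = ∑ T ∈ ssyt lam, T.weight := by
  classical
  rw [schurPoly, finsum_eq_sum_of_fintype]
  exact (sum_subtype _ (fun _ => mem_ssyt) Filling.weight).symm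

theorem schurPoly_zero (lam : Fin 0 → ℕ) : schurPoly 0 lam = 1 := by
  rw [schurPoly_eq_sum_ssyt]
  have : ssyt lam = univ :=
    eq_univ_of_forall fun _ => mem_ssyt.2 ⟨fun i => i.elim0, fun i => i.elim0⟩
  simp [this, Filling.weight]

theorem IsSSYT.le_entry {m : ℕ} {lam : Fin m → ℕ} {T : Filling lam} (hT : IsSSYT lam T)
    (hlam : Antitone lam) (i : Fin m) (j : Fin (lam i)) : (i : ℕ) ≤ T i j := by
  induction h : (i : ℕ) generalizing i with
  | zero => exact Nat.zero_le _
  | succ k ih =>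
    set i' : Fin m := ⟨k, by omega⟩
    have hi' : i' < i := Fin.lt_def.2 (by simp [i', h])
    have hj : (j : ℕ) < lam i' := j.2.trans_le (hlam hi'.le)
    have := hT.2 i' i ⟨j, hj⟩ j hi' rfl
    have := ih i' ⟨j, hj⟩ rfl
    rw [Fin.lt_def] at *
    omega

variable {n : ℕ} {lam : Fin (n + 1) → ℕ} {T : Filling lam}

theorem IsSSYT.entry_last_row (hT : IsSSYT lam T) (hlam : Antitone lam)
    (j : Fin (lam (Fin.last n))) : T (Fin.last n) j = Fin.last n :=
  Fin.last_le_iff.1 (Fin.le_def.2 (by simpa using hT.le_entry hlam (Fin.last n) j))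

/-- The shape of the subtableau formed by the entries `< n`, which avoids the last row. -/
noncomputable def Filling.innerShape (T : Filling lam) (i : Fin n) : ℕ :=
  #{j | T i.castSucc j ≠ Fin.last n}

theorem IsSSYT.ne_last_iff_lt_innerShape (hT : IsSSYT lam T) (i : Fin n)
    (j : Fin (lam i.castSucc)) : T i.castSucc j ≠ Fin.last n ↔ (j : ℕ) < T.innerShape i := by
  classical
  exact (Fin.lt_card_filter_univ_iff_apply_of_imp (fun j => T i.castSucc j ≠ Fin.last n)
    fun j' j hj h hlast => h (Fin.last_le_iff.1 (hlast ▸ hT.1 _ j j' hj))).symm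

theorem Filling.innerShape_le (T : Filling lam) (i : Fin n) : T.innerShape i ≤ lam i.castSucc :=
  (card_filter_le _ _).trans (by simp)

theorem IsSSYT.le_innerShape (hT : IsSSYT lam T) (hlam : Antitone lam) (i : Fin n) :
    lam i.succ ≤ T.innerShape i := by
  by_contra! h
  have hc : T.innerShape i < lam i.castSucc := h.trans_le (hlam (Fin.castSucc_le_succ i))
  have hlast : T i.castSucc ⟨_, hc⟩ = Fin.last n := by
    by_contra hne
    exact lt_irrefl _ ((hT.ne_last_iff_lt_innerShape i _).1 hne)
  have := hT.2 _ _ ⟨_, hc⟩ ⟨_, h⟩ Fin.castSucc_lt_succ rfl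
  rw [hlast] at this
  exact not_lt.2 (Fin.le_last _) this

theorem IsSSYT.innerShape_mem_interlacing (hT : IsSSYT lam T) (hlam : Antitone lam) :
    T.innerShape ∈ interlacing lam :=
  mem_interlacing.2 fun i => ⟨hT.le_innerShape hlam i, T.innerShape_le i⟩

variable {μ : Fin n → ℕ}

def Filling.extend (lam : Fin (n + 1) → ℕ) (T' : Filling μ) : Filling lam :=
  Fin.lastCases (motive := fun i => Fin (lam i) → Fin (n + 1)) (fun _ => Fin.last n)
    fun i j => if h : (j : ℕ) < μ i then (T' i ⟨j, h⟩).castSucc else Fin.last n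

@[simp]
theorem Filling.extend_last (T' : Filling μ) (j : Fin (lam (Fin.last n))) :
    T'.extend lam (Fin.last n) j = Fin.last n := by
  simp [Filling.extend]

theorem Filling.extend_castSucc (T' : Filling μ) (i : Fin n) (j : Fin (lam i.castSucc)) :
    T'.extend lam i.castSucc j =
      if h : (j : ℕ) < μ i then (T' i ⟨j, h⟩).castSucc else Fin.last n := by
  simp [Filling.extend]

/-- The subtableau of shape `μ` in rows `0, …, n-1`; an entry `n` inside `μ` is sent to the
junk value `i`. -/
def Filling.restrict (hμ : ∀ i, μ i ≤ lam i.castSucc) (T : Filling lam) : Filling μ :=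
  fun i j => Fin.lastCases (motive := fun _ => Fin n) i id (T i.castSucc (Fin.castLE (hμ i) j))

theorem Filling.restrict_extend (hμ : ∀ i, μ i ≤ lam i.castSucc) (T' : Filling μ) :
    (T'.extend lam).restrict hμ = T' := by
  funext i j
  simp [Filling.restrict, Filling.extend_castSucc]

theorem IsSSYT.castSucc_restrict (hT : IsSSYT lam T) (hshape : T.innerShape = μ)
    (hμ : ∀ i, μ i ≤ lam i.castSucc) (i : Fin n) (j : Fin (μ i)) :
    (T.restrict hμ i j).castSucc = T i.castSucc (Fin.castLE (hμ i) j) := by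
  have hne : T i.castSucc (Fin.castLE (hμ i) j) ≠ Fin.last n :=
    (hT.ne_last_iff_lt_innerShape i _).2 (by simp [hshape])
  rw [Filling.restrict, ← Fin.castSucc_castPred _ hne, Fin.lastCases_castSucc]
  rfl

theorem IsSSYT.extend_restrict (hT : IsSSYT lam T) (hlam : Antitone lam)
    (hshape : T.innerShape = μ) (hμ : ∀ i, μ i ≤ lam i.castSucc) :
    (T.restrict hμ).extend lam = T := by
  funext i j
  induction i using Fin.lastCases with
  | last => rw [Filling.extend_last, hT.entry_last_row hlam]
  | cast i =>
    rw [Filling.extend_castSucc]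
    split_ifs with h
    · exact hT.castSucc_restrict hshape hμ i _
    · by_contra hne
      exact h (hshape ▸ (hT.ne_last_iff_lt_innerShape i j).1 (Ne.symm hne))

theorem IsSSYT.restrict (hT : IsSSYT lam T) (hshape : T.innerShape = μ)
    (hμ : ∀ i, μ i ≤ lam i.castSucc) : IsSSYT μ (T.restrict hμ) := by
  constructor
  · intro i j j' hj
    rw [← Fin.castSucc_le_castSucc_iff, hT.castSucc_restrict hshape, hT.castSucc_restrict hshape]
    exact hT.1 _ _ _ hj
  · intro i i' j j' hi hj
    rw [← Fin.castSucc_lt_castSucc_iff, hT.castSucc_restrict hshape, hT.castSucc_restrict hshape]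
    exact hT.2 _ _ _ _ (Fin.castSucc_lt_castSucc_iff.2 hi) hj

theorem IsSSYT.extend {T' : Filling μ} (hT' : IsSSYT μ T') (hlam : Antitone lam)
    (hμ : ∀ i, lam i.succ ≤ μ i) : IsSSYT lam (T'.extend lam) := by
  have hcell {i : Fin n} {i' : Fin (n + 1)} (hi : i.castSucc < i') {c : ℕ} (hc : c < lam i') :
      c < μ i := hc.trans_le ((hlam (Fin.castSucc_lt_iff_succ_le.1 hi)).trans (hμ i))
  constructor
  · intro i j j' hj
    induction i using Fin.lastCases with
    | last => simp
    | cast i =>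
      simp only [Filling.extend_castSucc]
      split_ifs with h h' h'
      · exact Fin.castSucc_le_castSucc_iff.2 (hT'.1 _ _ _ hj)
      · exact Fin.le_last _
      · exact absurd ((Fin.le_def.1 hj).trans_lt h') h
      · exact le_rfl
  · intro i i' j j' hi hj
    induction i using Fin.lastCases with
    | last => exact absurd hi (not_lt.2 (Fin.le_last _))
    | cast i =>
      have h : (j : ℕ) < μ i := hcell hi (hj ▸ j'.2)
      rw [Filling.extend_castSucc, dif_pos h]
      induction i' using Fin.lastCases with
      | last => simp
      | cast i' =>
        rw [Filling.extend_castSucc]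
        split_ifs with h'
        · exact Fin.castSucc_lt_castSucc_iff.2
            (hT'.2 _ _ _ _ (Fin.castSucc_lt_castSucc_iff.1 hi) hj)
        · exact Fin.castSucc_lt_last _

theorem Filling.innerShape_extend (T' : Filling μ) (hμ : ∀ i, μ i ≤ lam i.castSucc) :
    (T'.extend lam).innerShape = μ := by
  funext i
  have (j : Fin (lam i.castSucc)) :
      T'.extend lam i.castSucc j ≠ Fin.last n ↔ (j : ℕ) < μ i := by
    rw [Filling.extend_castSucc]
    split_ifs with h <;> simp [h, Fin.castSucc_ne_last]
  rw [Filling.innerShape, filter_congr fun j _ => this j, Fin.card_filter_val_lt,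
    min_eq_right (hμ i)]

theorem Filling.prod_row_extend (T' : Filling μ) (i : Fin n) (hμ : μ i ≤ lam i.castSucc) :
    ∏ j, (X (T'.extend lam i.castSucc j) : MvPolynomial (Fin (n + 1)) ℤ) =
      (∏ j, X (T' i j).castSucc) * X (Fin.last n) ^ (lam i.castSucc - μ i) := by
  set f : ℕ → MvPolynomial (Fin (n + 1)) ℤ := fun j =>
    if h : j < μ i then X (T' i ⟨j, h⟩).castSucc else X (Fin.last n)
  calc _ = ∏ j ∈ range (lam i.castSucc), f j := by
        rw [← Fin.prod_univ_eq_prod_range]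
        simp only [Filling.extend_castSucc, apply_dite X, f]
    _ = (∏ j ∈ range (μ i), f j) * ∏ j ∈ Ico (μ i) (lam i.castSucc), f j :=
        (prod_range_mul_prod_Ico f hμ).symm
    _ = _ := by
        rw [← Fin.prod_univ_eq_prod_range, prod_congr rfl fun j hj => dif_neg
          (not_lt.2 (mem_Ico.1 hj).1), prod_const, Nat.card_Ico]
        simp [f]

theorem Filling.weight_extend (T' : Filling μ) (hμ : ∀ i, μ i ≤ lam i.castSucc) :
    (T'.extend lam).weight = X (Fin.last n) ^ lam (Fin.last n) *
      (∏ i, X (Fin.last n) ^ (lam i.castSucc - μ i)) * rename Fin.castSucc T'.weight := by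
  simp only [Filling.weight, Fin.prod_univ_castSucc, Filling.extend_last, prod_const, card_univ,
    Fintype.card_fin, T'.prod_row_extend _ (hμ _), prod_mul_distrib, map_prod, rename_X]
  ring

theorem schurPoly_succ (hlam : Antitone lam) :
    schurPoly (n + 1) lam = ∑ μ ∈ interlacing lam, X (Fin.last n) ^ lam (Fin.last n) *
      (∏ i, X (Fin.last n) ^ (lam i.castSucc - μ i)) * rename Fin.castSucc (schurPoly n μ) := by
  rw [schurPoly_eq_sum_ssyt, ← sum_fiberwise_of_maps_to (g := Filling.innerShape)
    fun T hT => (mem_ssyt.1 hT).innerShape_mem_interlacing hlam]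
  refine sum_congr rfl fun μ hμ => ?_
  have hμ := mem_interlacing.1 hμ
  rw [schurPoly_eq_sum_ssyt, map_sum, mul_sum]
  refine sum_nbij' (Filling.restrict fun i => (hμ i).2) (Filling.extend lam) ?_ ?_ ?_ ?_ ?_
  · simp only [mem_filter, mem_ssyt, and_imp]
    exact fun T hT hshape => hT.restrict hshape _
  · simp only [mem_filter, mem_ssyt]
    exact fun T' hT' =>
      ⟨hT'.extend hlam fun i => (hμ i).1, T'.innerShape_extend fun i => (hμ i).2⟩
  · simp only [mem_filter, mem_ssyt, and_imp]
    exact fun T hT hshape => hT.extend_restrict hlam hshape fun i => (hμ i).2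
  · exact fun T' _ => T'.restrict_extend _
  · simp only [mem_filter, mem_ssyt, and_imp]
    intro T hT hshape
    conv_lhs => rw [← hT.extend_restrict hlam hshape fun i => (hμ i).2]
    exact Filling.weight_extend _ fun i => (hμ i).2

end Tableaux

theorem schurPoly_mul_vandermonde (n : ℕ) {lam : Fin n → ℕ} (hlam : Antitone lam) :
    schurPoly n lam * alternant (X : Fin n → MvPolynomial (Fin n) ℤ) 0 = alternant X lam := by
  induction n with
  | zero => simp [schurPoly_zero, alternant]
  | succ n ih =>
    have hrename (μ : Fin n → ℕ) : rename Fin.castSucc (alternant X μ) =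
        alternant (fun i => (X i.castSucc : MvPolynomial (Fin (n + 1)) ℤ)) μ := by
      simpa using map_alternant (rename (R := ℤ) Fin.castSucc) X μ
    rw [schurPoly_succ hlam, alternant_zero_succ, alternant_succ _ hlam, sum_mul, mul_sum]
    refine sum_congr rfl fun μ hμ => ?_
    rw [← hrename, ← hrename, ← ih (antitone_of_mem_interlacing hlam hμ), map_mul]
    ring

open MvPolynomial in
theorem schur_eq_quotient_of_determinants_general (n : ℕ)
    (lam : Fin n → ℕ) (hlam : Antitone lam) :
    schurPoly n lam *
      (Matrix.of fun i j : Fin n =>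
        (X i : MvPolynomial (Fin n) ℤ) ^ (n - 1 - (j : ℕ))).det
    = (Matrix.of fun i j : Fin n =>
        (X i : MvPolynomial (Fin n) ℤ) ^ (lam j + (n - 1 - (j : ℕ)))).det := by
  simpa only [alternant, Pi.zero_apply, zero_add] using schurPoly_mul_vandermonde n hlam

open MvPolynomial in
/-- bialternant formula: for `n ≥ 1` and a partition
`λ_1 ≥ … ≥ λ_n ≥ 0`, in `ℤ[x_1,…,x_n]`,
`S_λ · det(x_i^{n-j}) = det(x_i^{λ_j + n - j})`. -/
theorem schur_eq_quotient_of_determinants (n : ℕ) (hn : 1 ≤ n)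
    (lam : Fin n → ℕ) (hlam : Antitone lam) :
    schurPoly n lam *
      (Matrix.of fun i j : Fin n =>
        (X i : MvPolynomial (Fin n) ℤ) ^ (n - 1 - (j : ℕ))).det
    = (Matrix.of fun i j : Fin n =>
        (X i : MvPolynomial (Fin n) ℤ) ^ (lam j + (n - 1 - (j : ℕ)))).det :=
  schur_eq_quotient_of_determinants_general n lam hlam
end

section
/- Let n ≥ 1 and let λ = (λ_1 ≥ λ_2 ≥ … ≥ λ_n ≥ 0) be a partition with at most n parts. Then, in ℤ[x_1,…,x_n], the Schur polynomial satisfies the Jacobi–Trudi identity S_λ(x_1,…,x_n) = det(h_{λ_i + j − i})_{1≤i,j≤n}. -/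
open MvPolynomial in
/-- The complete homogeneous symmetric polynomial `h_k(x_1,…,x_n)`: the sum of all
monomials of degree `k`; by convention `h_k = 0` for `k < 0` (index taken in `ℤ`). -/
noncomputable def completeHomog (n : ℕ) (k : ℤ) : MvPolynomial (Fin n) ℤ :=
  if 0 ≤ k then
    ∑ᶠ d : {d : Fin n → ℕ // ∑ i, d i = k.toNat}, ∏ i : Fin n, X i ^ d.1 i
  else 0

/-!
The Lindström–Gessel–Viennot argument. Expanding each `h_k` as a sum of monomials turns the term
of `σ` in the determinant into a signed sum over families of lattice paths, path `i` running from
`(n - 1 - i, 0)` to `(n - 1 - σ i + λ (σ i), n)` and contributing `x_s` for each east step in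
row `s`. Exchanging the tails of two paths at a canonically chosen meeting point is a
weight-preserving involution on intersecting families that flips the sign of `σ`, so only the
non-intersecting families survive. Their endpoints force `σ = 1`, and reading the east steps of
path `i` as the weakly increasing row `i` of a filling identifies them with the semistandard
tableaux of shape `λ`: two paths are disjoint exactly when the corresponding rows are
column-strict.
-/

namespace JacobiTrudi

open Finset MvPolynomial

variable {n : ℕ}

lemma exists_perm_of_or_of_and {ι : Type*} [DecidableEq ι] {P Q : ι → Prop} {a b : ι}
    (hor : Q a ∨ Q b ↔ P a ∨ P b) (hand : Q a ∧ Q b ↔ P a ∧ P b)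
    (hk : ∀ k, k ≠ a → k ≠ b → (Q k ↔ P k)) :
    ∃ π : Equiv.Perm ι, ∀ k, Q k ↔ P (π k) := by
  by_cases ha : Q a ↔ P a
  · refine ⟨1, fun k => ?_⟩
    by_cases hka : k = a
    · subst hka; exact ha
    by_cases hkb : k = b
    · subst hkb; simp only [Equiv.Perm.coe_one, id_eq]; tauto
    exact hk k hka hkb
  · refine ⟨Equiv.swap a b, fun k => ?_⟩
    by_cases hka : k = a
    · subst hka; simp only [Equiv.swap_apply_left]; tauto
    by_cases hkb : k = b
    · subst hkb; simp only [Equiv.swap_apply_right]; tauto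
    rw [Equiv.swap_apply_of_ne_of_ne hka hkb]
    exact hk k hka hkb

lemma exists_pair_iff_of_perm {ι : Type*} {P Q : ι → Prop} {π : Equiv.Perm ι}
    (h : ∀ k, Q k ↔ P (π k)) :
    (∃ i j, i ≠ j ∧ Q i ∧ Q j) ↔ (∃ i j, i ≠ j ∧ P i ∧ P j) := by
  constructor
  · rintro ⟨i, j, hij, hi, hj⟩
    exact ⟨π i, π j, π.injective.ne hij, (h i).1 hi, (h j).1 hj⟩
  · rintro ⟨i, j, hij, hi, hj⟩
    exact ⟨π.symm i, π.symm j, π.symm.injective.ne hij, (h _).2 (by simpa using hi),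
      (h _).2 (by simpa using hj)⟩

lemma le_of_forall_succ_le {f : Fin n → ℕ → ℕ} (hf : ∀ k, Monotone (f k)) {N : ℕ}
    (h : ∀ i i' : Fin n, (i : ℕ) + 1 = i' → ∀ t < N, f i' (t + 1) ≤ f i t)
    {i i' : Fin n} (hii : i < i') {t : ℕ} (ht : t < N) : f i' (t + 1) ≤ f i t := by
  obtain ⟨g, hg⟩ : ∃ g, (i' : ℕ) = i + g + 1 := ⟨i' - i - 1, by rw [Fin.lt_def] at hii; omega⟩
  induction g generalizing i' with
  | zero => exact h i i' (by omega) t ht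
  | succ g ih =>
    let k : Fin n := ⟨i + g + 1, by omega⟩
    have hk := ih (i' := k) (by rw [Fin.lt_def]; simp [k]) rfl
    have := h k i' (by simp [k]; omega) t ht
    have := hf k (Nat.le_add_right t 1)
    omega

lemma forall_castLE_lt_iff {m m' : ℕ} (h : m' ≤ m) {u : Fin m → Fin n} {v : Fin m' → Fin n}
    (hu : Monotone u) (hv : Monotone v) :
    (∀ j, u (Fin.castLE h j) < v j) ↔
      ∀ t < n, #{j | (v j : ℕ) < t + 1} ≤ #{j | (u j : ℕ) < t} := by
  constructor
  · intro H t _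
    refine card_le_card_of_injOn (Fin.castLE h) (fun j hj => ?_) (Fin.castLE_injective h).injOn
    simp only [coe_filter, mem_univ, true_and, Set.mem_ofPred_eq] at hj ⊢
    have := Fin.lt_def.1 (H j)
    omega
  · intro H j
    have hj : (j : ℕ) < #{j' | (v j' : ℕ) < v j + 1} :=
      (Fin.lt_card_filter_univ_iff_apply_of_imp (fun b => (v b : ℕ) < v j + 1)
        fun _ _ hab hb => (Fin.le_def.1 (hv hab)).trans_lt hb).2
        (Nat.lt_succ_self _)
    have hj' : (Fin.castLE h j : ℕ) < #{j' | (u j' : ℕ) < v j} :=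
      hj.trans_le (H _ (v j).isLt)
    exact Fin.lt_def.2 ((Fin.lt_card_filter_univ_iff_apply_of_imp (fun b => (u b : ℕ) < v j)
      fun _ _ hab hb => (Fin.le_def.1 (hu hab)).trans_lt hb).1 hj')

section PartialSum

def partialSum (d : Fin n → ℕ) (t : ℕ) : ℕ := ∑ s ∈ univ.filter (fun s : Fin n => (s : ℕ) < t), d s

variable (d : Fin n → ℕ)

@[simp]
lemma partialSum_zero : partialSum d 0 = 0 := by simp [partialSum]

lemma partialSum_val_succ (s : Fin n) : partialSum d (s + 1) = partialSum d s + d s := by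
  rw [partialSum, partialSum, add_comm (∑ _ ∈ _, _), ← sum_insert (by simp)]
  congr 1
  ext s'
  simp only [mem_filter, mem_univ, true_and, mem_insert, Fin.ext_iff]
  omega

lemma partialSum_succ (t : ℕ) :
    partialSum d (t + 1) = partialSum d t + if h : t < n then d ⟨t, h⟩ else 0 := by
  by_cases h : t < n
  · rw [dif_pos h]
    exact partialSum_val_succ d ⟨t, h⟩
  · rw [dif_neg h, add_zero, partialSum, partialSum]
    congr 1
    ext s
    simp only [mem_filter, mem_univ, true_and]
    omega

lemma partialSum_of_le {t : ℕ} (ht : n ≤ t) : partialSum d t = ∑ s, d s := by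
  rw [partialSum, filter_true_of_mem fun s _ => s.isLt.trans_le ht]

lemma monotone_partialSum : Monotone (partialSum d) := fun _ _ h =>
  sum_le_sum_of_subset fun _ => by simp only [mem_filter, mem_univ, true_and]; omega

lemma eq_of_partialSum_eq {d' : Fin n → ℕ} (h : ∀ t ≤ n, partialSum d t = partialSum d' t) :
    d = d' := by
  funext s
  have := partialSum_val_succ d s
  have := partialSum_val_succ d' s
  have := h s s.isLt.le
  have := h (s + 1) s.isLt
  omega

end PartialSum

section Paths

/-- Path `i` starts at `(n - 1 - i, 0)` and takes `D i s` unit steps east in row `s` before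
stepping north; `pathX D i t` is its abscissa when it enters row `t`. -/
def pathX (D : Fin n → Fin n → ℕ) (i : Fin n) (t : ℕ) : ℕ := n - 1 - i + partialSum (D i) t

def OnPath (D : Fin n → Fin n → ℕ) (i : Fin n) (t x : ℕ) : Prop :=
  pathX D i t ≤ x ∧ x ≤ pathX D i (t + 1)

def IsMeeting (D : Fin n → Fin n → ℕ) (t x : ℕ) : Prop :=
  t < n ∧ ∃ i j, i ≠ j ∧ OnPath D i t x ∧ OnPath D j t x

def Intersecting (D : Fin n → Fin n → ℕ) : Prop := ∃ t x, IsMeeting D t x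

variable {D : Fin n → Fin n → ℕ}

lemma monotone_pathX (i : Fin n) : Monotone (pathX D i) := fun _ _ h =>
  Nat.add_le_add_left (monotone_partialSum _ h) _

lemma pathX_val_succ (i s : Fin n) : pathX D i (s + 1) = pathX D i s + D i s := by
  rw [pathX, pathX, partialSum_val_succ, add_assoc]

lemma pathX_succ (i : Fin n) (t : ℕ) :
    pathX D i (t + 1) = pathX D i t + if h : t < n then D i ⟨t, h⟩ else 0 := by
  rw [pathX, pathX, partialSum_succ, add_assoc]

lemma pathX_of_le (i : Fin n) {t : ℕ} (ht : n ≤ t) : pathX D i t = n - 1 - i + ∑ s, D i s := by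
  rw [pathX, partialSum_of_le _ ht]

lemma ext_of_pathX_eq {D' : Fin n → Fin n → ℕ} (h : ∀ i, ∀ t ≤ n, pathX D i t = pathX D' i t) :
    D = D' :=
  funext fun i => eq_of_partialSum_eq _ fun t ht => Nat.add_left_cancel (h i t ht)

lemma strictAnti_pathX_zero : StrictAnti (pathX D · 0) := fun i i' h => by
  simp only [pathX, partialSum_zero, add_zero]
  have := i.isLt
  rw [Fin.lt_def] at h
  omega

lemma not_intersecting_iff :
    ¬ Intersecting D ↔ ∀ i i' : Fin n, i < i' → ∀ t < n, pathX D i' (t + 1) < pathX D i t := by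
  constructor
  · intro hD i i' hii
    -- otherwise path `i'` reaches the point where path `i` enters row `t`
    have step : ∀ t < n, pathX D i' t < pathX D i t → pathX D i' (t + 1) < pathX D i t := by
      intro t ht hlt
      by_contra hge
      exact hD ⟨t, pathX D i t, ht, i, i', hii.ne,
        ⟨le_rfl, monotone_pathX i t.le_succ⟩, ⟨hlt.le, not_lt.mp hge⟩⟩
    intro t ht
    induction t with
    | zero => exact step 0 ht (strictAnti_pathX_zero hii)
    | succ t ih => exact step _ ht ((ih (by omega)).trans_le (monotone_pathX i t.le_succ))
  · rintro h ⟨t, x, ht, i, j, hij, ⟨hi, hi'⟩, ⟨hj, hj'⟩⟩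
    rcases hij.lt_or_gt with hlt | hlt
    · have := h i j hlt t ht
      omega
    · have := h j i hlt t ht
      omega

-- For adjacent paths, whose starting points differ by one, disjointness is exactly this
-- inequality; for the others it follows by chaining through the intermediate paths.
lemma not_intersecting_iff_partialSum_le : ¬ Intersecting D ↔
    ∀ i i' : Fin n, i < i' → ∀ t < n, partialSum (D i') (t + 1) ≤ partialSum (D i) t := by
  rw [not_intersecting_iff]
  constructor
  · intro h i i' hii t ht
    refine le_of_forall_succ_le (fun k => monotone_partialSum (D k)) (fun i i' hi t ht => ?_)
      hii ht
    have := h i i' (by rw [Fin.lt_def]; omega) t ht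
    simp only [pathX] at this
    omega
  · intro h i i' hii t ht
    have := h i i' hii t ht
    have := i'.isLt
    rw [Fin.lt_def] at hii
    simp only [pathX]
    omega

lemma pathX_lt_pathX_of_not_intersecting (hD : ¬ Intersecting D) {i i' : Fin n} (hii : i < i') :
    pathX D i' n < pathX D i n := by
  have := not_intersecting_iff.1 hD i i' hii (n - 1) (by omega)
  rw [Nat.sub_add_cancel (by omega)] at this
  exact this.trans_le (monotone_pathX i (Nat.sub_le n 1))

end Paths

section TailSwap

variable (D : Fin n → Fin n → ℕ) (t₀ : ℕ)

/-- Row counts of the path that follows path `a` until it enters row `t₀`, then runs east to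
where path `b` leaves row `t₀`, and follows `b` from there on. -/
def splice (a b : Fin n) (s : Fin n) : ℕ :=
  if (s : ℕ) < t₀ then D a s
  else if (s : ℕ) = t₀ then pathX D b (t₀ + 1) - pathX D a t₀
  else D b s

def tailSwap (τ : Equiv.Perm (Fin n)) : Fin n → Fin n → ℕ := fun k => splice D t₀ k (τ k)

def TailSwappable (τ : Equiv.Perm (Fin n)) : Prop :=
  t₀ < n ∧ ∀ k, pathX D k t₀ ≤ pathX D (τ k) (t₀ + 1)

variable {D t₀} {τ : Equiv.Perm (Fin n)}

lemma pathX_tailSwap (h : TailSwappable D t₀ τ) (k : Fin n) (t : ℕ) :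
    pathX (tailSwap D t₀ τ) k t = if t ≤ t₀ then pathX D k t else pathX D (τ k) t := by
  induction t with
  | zero => simp [pathX]
  | succ t ih =>
    rw [pathX_succ]
    rcases lt_trichotomy t t₀ with ht | rfl | ht
    · rw [ih, if_pos ht.le, if_pos (show t + 1 ≤ t₀ from ht), pathX_succ]
      simp [tailSwap, splice, ht, ht.trans h.1]
    · rw [ih, if_pos le_rfl, if_neg (by omega), dif_pos h.1]
      have := h.2 k
      simp only [tailSwap, splice, lt_irrefl, if_false, if_true]
      omega
    · rw [ih, if_neg (by omega), if_neg (by omega), pathX_succ]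
      split_ifs
      · simp [tailSwap, splice, ht.not_gt, ht.ne']
      · rfl

lemma tailSwappable_tailSwap_inv (h : TailSwappable D t₀ τ) :
    TailSwappable (tailSwap D t₀ τ) t₀ τ⁻¹ := by
  refine ⟨h.1, fun k => ?_⟩
  rw [pathX_tailSwap h, pathX_tailSwap h, if_pos le_rfl, if_neg (by omega), Equiv.Perm.coe_inv,
    Equiv.apply_symm_apply]
  exact monotone_pathX k t₀.le_succ

lemma tailSwap_tailSwap_inv (h : TailSwappable D t₀ τ) :
    tailSwap (tailSwap D t₀ τ) t₀ τ⁻¹ = D := by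
  refine ext_of_pathX_eq fun k t _ => ?_
  rw [pathX_tailSwap (tailSwappable_tailSwap_inv h), pathX_tailSwap h, pathX_tailSwap h,
    Equiv.Perm.coe_inv, Equiv.apply_symm_apply]
  split_ifs <;> rfl

lemma sum_pathX_tailSwap (h : TailSwappable D t₀ τ) (t : ℕ) :
    ∑ k, pathX (tailSwap D t₀ τ) k t = ∑ k, pathX D k t := by
  simp only [pathX_tailSwap h]
  split_ifs
  · rfl
  · exact Equiv.sum_comp τ (pathX D · t)

lemma onPath_tailSwap_of_lt (h : TailSwappable D t₀ τ) {t : ℕ} (ht : t < t₀) (k : Fin n)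
    (x : ℕ) : OnPath (tailSwap D t₀ τ) k t x ↔ OnPath D k t x := by
  rw [OnPath, OnPath, pathX_tailSwap h, pathX_tailSwap h, if_pos ht.le,
    if_pos (show t + 1 ≤ t₀ from ht)]

lemma onPath_tailSwap_of_gt (h : TailSwappable D t₀ τ) {t : ℕ} (ht : t₀ < t) (k : Fin n)
    (x : ℕ) : OnPath (tailSwap D t₀ τ) k t x ↔ OnPath D (τ k) t x := by
  rw [OnPath, OnPath, pathX_tailSwap h, pathX_tailSwap h, if_neg ht.not_ge, if_neg (by omega)]

lemma onPath_tailSwap_self (h : TailSwappable D t₀ τ) (k : Fin n) (x : ℕ) :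
    OnPath (tailSwap D t₀ τ) k t₀ x ↔ pathX D k t₀ ≤ x ∧ x ≤ pathX D (τ k) (t₀ + 1) := by
  rw [OnPath, pathX_tailSwap h, pathX_tailSwap h, if_pos le_rfl, if_neg (by omega)]

end TailSwap

noncomputable def pathWeight (D : Fin n → Fin n → ℕ) : MvPolynomial (Fin n) ℤ :=
  ∏ i, ∏ s, X s ^ D i s

lemma pathWeight_eq_of_sum_pathX_eq {D D' : Fin n → Fin n → ℕ}
    (h : ∀ t, ∑ k, pathX D' k t = ∑ k, pathX D k t) : pathWeight D' = pathWeight D := by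
  have hcol : ∀ s : Fin n, ∑ k, D' k s = ∑ k, D k s := by
    intro s
    have h₁ := h (s + 1)
    have h₀ := h s
    simp only [pathX_val_succ, sum_add_distrib] at h₁
    omega
  simp only [pathWeight]
  rw [prod_comm, prod_comm (f := fun i s => X s ^ D i s)]
  simp only [prod_pow_eq_pow_sum, hcol]

section FirstMeeting

-- Any choice of a meeting point and of two paths through it works, as long as it only depends
-- on the set of meeting points and on which paths pass through them: these data are preserved by
-- the tail swap, which makes `swapAtMeet` an involution.
noncomputable def meetRow (D : Fin n → Fin n → ℕ) : ℕ := sInf {t | ∃ x, IsMeeting D t x}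

noncomputable def meetX (D : Fin n → Fin n → ℕ) : ℕ := sInf {x | IsMeeting D (meetRow D) x}

variable [NeZero n]

noncomputable def meetPath₁ (D : Fin n → Fin n → ℕ) : Fin n :=
  sInf {k | OnPath D k (meetRow D) (meetX D)}

noncomputable def meetPath₂ (D : Fin n → Fin n → ℕ) : Fin n :=
  sInf {k | k ≠ meetPath₁ D ∧ OnPath D k (meetRow D) (meetX D)}

noncomputable def swapAtMeet (D : Fin n → Fin n → ℕ) : Fin n → Fin n → ℕ :=
  tailSwap D (meetRow D) (Equiv.swap (meetPath₁ D) (meetPath₂ D))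

variable {D : Fin n → Fin n → ℕ}

lemma meetPath_spec (hD : Intersecting D) :
    meetRow D < n ∧ meetPath₁ D ≠ meetPath₂ D ∧
      OnPath D (meetPath₁ D) (meetRow D) (meetX D) ∧
      OnPath D (meetPath₂ D) (meetRow D) (meetX D) := by
  obtain ⟨ht, i, j, hij, hi, hj⟩ : IsMeeting D (meetRow D) (meetX D) :=
    Nat.sInf_mem (Nat.sInf_mem (s := {t | ∃ x, IsMeeting D t x}) hD)
  have h₁ : meetPath₁ D ∈ {k | OnPath D k (meetRow D) (meetX D)} := csInf_mem ⟨i, hi⟩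
  have h₂ : meetPath₂ D ∈ {k | k ≠ meetPath₁ D ∧ OnPath D k (meetRow D) (meetX D)} := by
    refine csInf_mem ?_
    by_cases hi₁ : i = meetPath₁ D
    · exact ⟨j, hi₁ ▸ hij.symm, hj⟩
    · exact ⟨i, hi₁, hi⟩
  exact ⟨ht, Ne.symm h₂.1, h₁, h₂.2⟩

lemma tailSwappable_meet (hD : Intersecting D) :
    TailSwappable D (meetRow D) (Equiv.swap (meetPath₁ D) (meetPath₂ D)) := by
  obtain ⟨ht₀, -, ⟨h₁, h₁'⟩, ⟨h₂, h₂'⟩⟩ := meetPath_spec hD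
  refine ⟨ht₀, fun k => ?_⟩
  rcases eq_or_ne k (meetPath₁ D) with rfl | hk₁
  · rw [Equiv.swap_apply_left]; omega
  rcases eq_or_ne k (meetPath₂ D) with rfl | hk₂
  · rw [Equiv.swap_apply_right]; omega
  rw [Equiv.swap_apply_of_ne_of_ne hk₁ hk₂]
  exact monotone_pathX k (Nat.le_succ _)

lemma pathX_swapAtMeet (hD : Intersecting D) (k : Fin n) (t : ℕ) :
    pathX (swapAtMeet D) k t = if t ≤ meetRow D then pathX D k t
      else pathX D (Equiv.swap (meetPath₁ D) (meetPath₂ D) k) t :=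
  pathX_tailSwap (tailSwappable_meet hD) k t

lemma exists_perm_onPath_swapAtMeet (hD : Intersecting D) (t x : ℕ) :
    ∃ π : Equiv.Perm (Fin n), ∀ k, OnPath (swapAtMeet D) k t x ↔ OnPath D (π k) t x := by
  obtain ⟨-, -, ⟨h₁, h₁'⟩, ⟨h₂, h₂'⟩⟩ := meetPath_spec hD
  have hτ := tailSwappable_meet hD
  rcases lt_trichotomy t (meetRow D) with ht | rfl | ht
  · exact ⟨1, fun k => onPath_tailSwap_of_lt hτ ht k x⟩
  · -- both exchanged row intervals contain the meeting point, so exchanging their right ends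
    -- preserves their union and their intersection
    refine exists_perm_of_or_of_and (Q := (OnPath (swapAtMeet D) · _ x)) (P := (OnPath D · _ x))
      (a := meetPath₁ D) (b := meetPath₂ D) ?_ ?_ ?_ <;>
      simp only [swapAtMeet, onPath_tailSwap_self hτ, Equiv.swap_apply_left,
        Equiv.swap_apply_right]
    · unfold OnPath; omega
    · unfold OnPath; omega
    · intro k hk₁ hk₂
      rw [Equiv.swap_apply_of_ne_of_ne hk₁ hk₂, OnPath]
  · exact ⟨_, fun k => onPath_tailSwap_of_gt hτ ht k x⟩

lemma isMeeting_swapAtMeet_iff (hD : Intersecting D) (t x : ℕ) :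
    IsMeeting (swapAtMeet D) t x ↔ IsMeeting D t x := by
  obtain ⟨π, hπ⟩ := exists_perm_onPath_swapAtMeet hD t x
  exact and_congr_right fun _ => exists_pair_iff_of_perm hπ

lemma intersecting_swapAtMeet (hD : Intersecting D) : Intersecting (swapAtMeet D) := by
  obtain ⟨t, x, h⟩ := hD
  exact ⟨t, x, (isMeeting_swapAtMeet_iff ⟨t, x, h⟩ t x).2 h⟩

lemma meetRow_swapAtMeet (hD : Intersecting D) : meetRow (swapAtMeet D) = meetRow D := by
  simp only [meetRow, isMeeting_swapAtMeet_iff hD]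

lemma meetX_swapAtMeet (hD : Intersecting D) : meetX (swapAtMeet D) = meetX D := by
  simp only [meetX, meetRow_swapAtMeet hD, isMeeting_swapAtMeet_iff hD]

lemma onPath_swapAtMeet_meet (hD : Intersecting D) (k : Fin n) :
    OnPath (swapAtMeet D) k (meetRow D) (meetX D) ↔ OnPath D k (meetRow D) (meetX D) := by
  obtain ⟨-, -, ⟨h₁, h₁'⟩, ⟨h₂, h₂'⟩⟩ := meetPath_spec hD
  rw [swapAtMeet, onPath_tailSwap_self (tailSwappable_meet hD), OnPath]
  rcases eq_or_ne k (meetPath₁ D) with rfl | hk₁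
  · rw [Equiv.swap_apply_left]; omega
  rcases eq_or_ne k (meetPath₂ D) with rfl | hk₂
  · rw [Equiv.swap_apply_right]; omega
  rw [Equiv.swap_apply_of_ne_of_ne hk₁ hk₂]

lemma meetPath₁_swapAtMeet (hD : Intersecting D) : meetPath₁ (swapAtMeet D) = meetPath₁ D := by
  simp only [meetPath₁, meetRow_swapAtMeet hD, meetX_swapAtMeet hD, onPath_swapAtMeet_meet hD]

lemma meetPath₂_swapAtMeet (hD : Intersecting D) : meetPath₂ (swapAtMeet D) = meetPath₂ D := by
  simp only [meetPath₂, meetPath₁_swapAtMeet hD, meetRow_swapAtMeet hD, meetX_swapAtMeet hD,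
    onPath_swapAtMeet_meet hD]

lemma swapAtMeet_swapAtMeet (hD : Intersecting D) : swapAtMeet (swapAtMeet D) = D := by
  conv_lhs => rw [swapAtMeet, meetRow_swapAtMeet hD, meetPath₁_swapAtMeet hD,
    meetPath₂_swapAtMeet hD, ← Equiv.swap_inv]
  exact tailSwap_tailSwap_inv (tailSwappable_meet hD)

lemma pathWeight_swapAtMeet (hD : Intersecting D) : pathWeight (swapAtMeet D) = pathWeight D :=
  pathWeight_eq_of_sum_pathX_eq (sum_pathX_tailSwap (tailSwappable_meet hD))

end FirstMeeting

section Families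

def exponentsOfDegree (n : ℕ) (k : ℤ) : Finset (Fin n → ℕ) :=
  if 0 ≤ k then Finset.Nat.antidiagonalTuple n k.toNat else ∅

lemma mem_exponentsOfDegree {k : ℤ} {d : Fin n → ℕ} :
    d ∈ exponentsOfDegree n k ↔ ∑ s, (d s : ℤ) = k := by
  rw [exponentsOfDegree, ← Nat.cast_sum]
  split_ifs with hk
  · rw [Finset.Nat.mem_antidiagonalTuple]
    omega
  · simp only [notMem_empty, false_iff]
    omega

lemma completeHomog_eq_sum (k : ℤ) :
    completeHomog n k = ∑ d ∈ exponentsOfDegree n k, ∏ s, X s ^ d s := by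
  rw [completeHomog, exponentsOfDegree]
  split_ifs
  · let _ : Fintype {d : Fin n → ℕ // ∑ i, d i = k.toNat} :=
      Fintype.subtype _ fun _ => Finset.Nat.mem_antidiagonalTuple
    rw [finsum_eq_sum_of_fintype]
    exact (sum_subtype _ (fun _ => Finset.Nat.mem_antidiagonalTuple)
      fun d => ∏ s, X s ^ d s).symm
  · rfl

def pathFamilies (lam : Fin n → ℕ) (σ : Equiv.Perm (Fin n)) : Finset (Fin n → Fin n → ℕ) :=
  Fintype.piFinset fun i => exponentsOfDegree n (lam (σ i) + i - σ i)

def families (lam : Fin n → ℕ) : Finset (Σ _ : Equiv.Perm (Fin n), Fin n → Fin n → ℕ) :=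
  univ.sigma (pathFamilies lam)

variable {lam : Fin n → ℕ}

lemma mem_families {p : Σ _ : Equiv.Perm (Fin n), Fin n → Fin n → ℕ} :
    p ∈ families lam ↔ ∀ i, pathX p.2 i n = n - 1 - p.1 i + lam (p.1 i) := by
  simp only [families, mem_sigma, mem_univ, true_and, pathFamilies, Fintype.mem_piFinset,
    mem_exponentsOfDegree, pathX_of_le _ le_rfl, ← Nat.cast_sum]
  refine forall_congr' fun i => ?_
  have := i.isLt
  have := (p.1 i).isLt
  omega

lemma det_eq_sum_families (lam : Fin n → ℕ) :
    (Matrix.of fun i j : Fin n => completeHomog n ((lam i : ℤ) + (j : ℤ) - (i : ℤ))).det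
      = ∑ p ∈ families lam, Equiv.Perm.sign p.1 • pathWeight p.2 := by
  rw [Matrix.det_apply, families, sum_sigma]
  refine sum_congr rfl fun σ _ => ?_
  simp only [Matrix.of_apply, completeHomog_eq_sum, prod_univ_sum, smul_sum, pathFamilies,
    pathWeight]

open scoped Classical in
lemma sum_intersecting_eq_zero [NeZero n] (lam : Fin n → ℕ) :
    ∑ p ∈ (families lam).filter (fun p => Intersecting p.2),
      Equiv.Perm.sign p.1 • pathWeight p.2 = 0 := by
  refine sum_involution (fun p _ => ⟨p.1 * Equiv.swap (meetPath₁ p.2) (meetPath₂ p.2),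
    swapAtMeet p.2⟩) ?_ ?_ ?_ ?_ <;> simp only [mem_filter] <;> rintro ⟨σ, D⟩ ⟨hfam, hD⟩
  · obtain ⟨-, hne, -, -⟩ := meetPath_spec hD
    rw [pathWeight_swapAtMeet hD, Equiv.Perm.sign_mul, Equiv.Perm.sign_swap hne, mul_neg_one,
      Units.neg_smul, add_neg_cancel]
  · intro _ h
    obtain ⟨-, hne, -, -⟩ := meetPath_spec hD
    exact hne (by simpa using congrArg Sigma.fst h)
  · refine ⟨mem_families.2 fun k => ?_, intersecting_swapAtMeet hD⟩
    rw [pathX_swapAtMeet hD, if_neg (meetPath_spec hD).1.not_ge]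
    exact mem_families.1 hfam _
  · simp only [meetPath₁_swapAtMeet hD, meetPath₂_swapAtMeet hD, mul_assoc, Equiv.swap_mul_self,
      mul_one, swapAtMeet_swapAtMeet hD]

lemma eq_one_of_not_intersecting (hlam : Antitone lam)
    {p : Σ _ : Equiv.Perm (Fin n), Fin n → Fin n → ℕ} (hp : p ∈ families lam)
    (hD : ¬ Intersecting p.2) : p.1 = 1 := by
  -- endpoints of disjoint paths decrease with the index, and so does `n - 1 - m + lam m`
  suffices hσ : StrictMono p.1 from Equiv.ext fun i => hσ.apply_eq
  intro i i' hii
  by_contra hle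
  have hlt : p.1 i' < p.1 i := lt_of_le_of_ne (not_lt.1 hle) (p.1.injective.ne hii.ne')
  have hends := pathX_lt_pathX_of_not_intersecting hD hii
  rw [mem_families.1 hp, mem_families.1 hp] at hends
  have := hlam hlt.le
  have := (p.1 i).isLt
  rw [Fin.lt_def] at hlt
  omega

end Families

section Tableaux

variable {lam : Fin n → ℕ}

def content (T : ∀ i : Fin n, Fin (lam i) → Fin n) (i s : Fin n) : ℕ := #{j | T i j = s}

lemma partialSum_content (T : ∀ i : Fin n, Fin (lam i) → Fin n) (i : Fin n) (t : ℕ) :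
    partialSum (content T i) t = #{j | (T i j : ℕ) < t} := by
  rw [card_eq_sum_card_fiberwise (f := T i) (t := univ.filter fun s : Fin n => (s : ℕ) < t)
    (fun j hj => by simpa using hj), partialSum]
  refine sum_congr rfl fun s hs => ?_
  rw [content, filter_filter]
  congr 1
  ext j
  simp only [mem_filter, mem_univ, true_and] at hs ⊢
  constructor
  · intro h; exact ⟨h ▸ hs, h⟩
  · exact And.right

lemma partialSum_content_of_le (T : ∀ i : Fin n, Fin (lam i) → Fin n) (i : Fin n) {t : ℕ}
    (ht : n ≤ t) : partialSum (content T i) t = lam i := by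
  rw [partialSum_content, filter_true_of_mem fun j _ => (T i j).isLt.trans_le ht, card_univ,
    Fintype.card_fin]

/-- The `j`-th letter (counting from `0`) of the weakly increasing word in which the letter `s`
occurs `d s` times; it is `n` when `j` exceeds the length of the word. -/
def letterAt (d : Fin n → ℕ) (j : ℕ) : ℕ := #{s : Fin n | partialSum d (s + 1) ≤ j}

lemma letterAt_lt_iff (d : Fin n → ℕ) (j : ℕ) {t : ℕ} (ht : t ≤ n) :
    letterAt d j < t ↔ j < partialSum d t := by
  rcases t with _ | t
  · simp
  rw [← not_iff_not, not_lt, not_lt, Nat.succ_le_iff]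
  exact Fin.lt_card_filter_univ_iff_apply_of_imp (j := ⟨t, ht⟩) _
    fun s s' hs h => (monotone_partialSum d (by rw [Fin.le_def] at hs; omega)).trans h

lemma monotone_letterAt (d : Fin n → ℕ) : Monotone (letterAt d) := fun _ _ h =>
  card_le_card fun _ => by simp only [mem_filter, mem_univ, true_and]; exact fun hs => hs.trans h

def tableauOfContent (lam : Fin n → ℕ) (D : Fin n → Fin n → ℕ) (i : Fin n) (j : Fin (lam i)) :
    Fin n :=
  ⟨min (letterAt (D i) j) (n - 1), by have := i.isLt; omega⟩

variable {D : Fin n → Fin n → ℕ}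

lemma val_tableauOfContent {i : Fin n} (h : partialSum (D i) n = lam i) (j : Fin (lam i)) :
    (tableauOfContent lam D i j : ℕ) = letterAt (D i) j := by
  have := (letterAt_lt_iff (D i) j le_rfl).2 (by rw [h]; exact j.isLt)
  simp only [tableauOfContent]
  omega

lemma monotone_tableauOfContent (i : Fin n) : Monotone (tableauOfContent lam D i) :=
  fun _ _ h => Fin.mk_le_mk.2 (min_le_min_right _ (monotone_letterAt _ h))

lemma content_tableauOfContent (h : ∀ i, partialSum (D i) n = lam i) :
    content (tableauOfContent lam D) = D := by
  funext i
  refine eq_of_partialSum_eq _ fun t ht => ?_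
  rw [partialSum_content]
  simp only [val_tableauOfContent (h i), letterAt_lt_iff _ _ ht]
  rw [Fin.card_filter_val_lt, ← h i]
  exact min_eq_right (monotone_partialSum _ ht)

lemma tableauOfContent_content {T : ∀ i : Fin n, Fin (lam i) → Fin n}
    (hT : ∀ i, Monotone (T i)) : tableauOfContent lam (content T) = T := by
  funext i j
  have hrow := partialSum_content_of_le T i le_rfl
  have key : ∀ t ≤ n, letterAt (content T i) j < t ↔ (T i j : ℕ) < t := fun t ht => by
    rw [letterAt_lt_iff _ _ ht, partialSum_content]
    exact Fin.lt_card_filter_univ_iff_apply_of_imp _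
      fun a b hab h => lt_of_le_of_lt (hT i hab) h
  have h₁ := (key _ (T i j).isLt).2 (Nat.lt_succ_self _)
  have hj : letterAt (content T i) j < n :=
    (letterAt_lt_iff _ _ le_rfl).2 (by rw [hrow]; exact j.isLt)
  have h₂ := (key _ hj).1 (Nat.lt_succ_self _)
  exact Fin.ext (by rw [val_tableauOfContent hrow]; omega)

lemma isSSYT_iff_partialSum_le (hlam : Antitone lam) {T : ∀ i : Fin n, Fin (lam i) → Fin n}
    (hT : ∀ i, Monotone (T i)) : IsSSYT lam T ↔
      ∀ i i' : Fin n, i < i' → ∀ t < n,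
        partialSum (content T i') (t + 1) ≤ partialSum (content T i) t := by
  simp only [IsSSYT, partialSum_content]
  rw [and_iff_right fun i _ _ h => hT i h]
  constructor
  · intro H i i' hii
    exact (forall_castLE_lt_iff (hlam hii.le) (hT i) (hT i')).1 fun j => H i i' _ j hii rfl
  · intro H i i' j j' hii hj
    convert (forall_castLE_lt_iff (hlam hii.le) (hT i) (hT i')).2 (H i i' hii) j'
    exact Fin.ext hj

lemma isSSYT_iff_not_intersecting (hlam : Antitone lam) {T : ∀ i : Fin n, Fin (lam i) → Fin n}
    (hT : ∀ i, Monotone (T i)) : IsSSYT lam T ↔ ¬ Intersecting (content T) := by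
  rw [isSSYT_iff_partialSum_le hlam hT, not_intersecting_iff_partialSum_le]

lemma prod_X_eq_pathWeight_content (T : ∀ i : Fin n, Fin (lam i) → Fin n) :
    ∏ i, ∏ j, X (T i j) = pathWeight (content T) := by
  refine prod_congr rfl fun i _ => ?_
  rw [← prod_fiberwise univ (T i)]
  refine prod_congr rfl fun s _ => ?_
  rw [prod_congr rfl fun j hj => by rw [(mem_filter.1 hj).2], prod_const]
  rfl

open scoped Classical in
lemma schurPoly_eq_sum (lam : Fin n → ℕ) :
    schurPoly n lam = ∑ T ∈ univ.filter (IsSSYT lam), ∏ i, ∏ j, X (T i j) := by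
  rw [schurPoly, finsum_eq_sum_of_fintype]
  exact (sum_subtype _ (fun _ => by simp)
    fun T : ∀ i : Fin n, Fin (lam i) → Fin n => ∏ i, ∏ j, X (T i j)).symm

open scoped Classical in
lemma sum_not_intersecting_eq_schurPoly (hlam : Antitone lam) :
    ∑ p ∈ (families lam).filter (fun p => ¬ Intersecting p.2),
      Equiv.Perm.sign p.1 • pathWeight p.2 = schurPoly n lam := by
  have hfam : ∀ p ∈ (families lam).filter (fun p => ¬ Intersecting p.2),
      p.1 = 1 ∧ ∀ i, partialSum (p.2 i) n = lam i := by
    intro p hp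
    rw [mem_filter] at hp
    have hσ := eq_one_of_not_intersecting hlam hp.1 hp.2
    refine ⟨hσ, fun i => ?_⟩
    have := mem_families.1 hp.1 i
    rw [hσ, pathX] at this
    simpa using this
  rw [schurPoly_eq_sum]
  symm
  refine sum_nbij' (fun T => ⟨1, content T⟩) (fun p => tableauOfContent lam p.2) ?_ ?_ ?_ ?_ ?_
  · intro T hT
    rw [mem_filter] at hT ⊢
    refine ⟨mem_families.2 fun i => by rw [pathX, partialSum_content_of_le T i le_rfl]; rfl, ?_⟩
    exact (isSSYT_iff_not_intersecting hlam fun i _ _ h => hT.2.1 i _ _ h).1 hT.2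
  · intro p hp
    rw [mem_filter]
    refine ⟨mem_univ _, (isSSYT_iff_not_intersecting hlam monotone_tableauOfContent).2 ?_⟩
    rw [content_tableauOfContent (hfam p hp).2]
    exact (mem_filter.1 hp).2
  · intro T hT
    exact tableauOfContent_content fun i _ _ h => (mem_filter.1 hT).2.1 i _ _ h
  · intro p hp
    exact Sigma.ext (hfam p hp).1.symm (heq_of_eq (content_tableauOfContent (hfam p hp).2))
  · intro T _
    rw [prod_X_eq_pathWeight_content, Equiv.Perm.sign_one, one_smul]

end Tableaux

end JacobiTrudi

/-- Jacobi–Trudi identity: for `n ≥ 1` and a partition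
`λ_1 ≥ … ≥ λ_n ≥ 0`, in `ℤ[x_1,…,x_n]`, `S_λ = det (h_{λ_i + j - i})_{1 ≤ i,j ≤ n}`. -/
theorem jacobi_trudi (n : ℕ) (hn : 1 ≤ n) (lam : Fin n → ℕ) (hlam : Antitone lam) :
    schurPoly n lam
    = (Matrix.of fun i j : Fin n =>
        completeHomog n ((lam i : ℤ) + (j : ℤ) - (i : ℤ))).det := by
  classical
  have : NeZero n := ⟨by omega⟩
  open JacobiTrudi in
  rw [det_eq_sum_families, ← Finset.sum_filter_add_sum_filter_not _ fun p => Intersecting p.2,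
    sum_intersecting_eq_zero, zero_add, sum_not_intersecting_eq_schurPoly hlam]
end

section
/- Let F be a field, n ≥ 1, and let x_1,…,x_n, y_1,…,y_n be elements of F such that 1 − x_i y_j ≠ 0 for all i, j. Then the Cauchy determinant identity holds: det(1/(1 − x_i y_j))_{1≤i,j≤n} = ∏_{1≤i<j≤n} (x_i − x_j) · ∏_{1≤i<j≤n} (y_i − y_j) / ∏_{i=1}^n ∏_{j=1}^n (1 − x_i y_j). -/
/-!
Pivoting on the entry `(1 - x₀ y₀)⁻¹`, the Schur complement of the matrix `((1 - xᵢ yⱼ)⁻¹)` is the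
same kind of matrix in the remaining variables, with row `i` rescaled by `(x₀ - xᵢ) / (1 - xᵢ y₀)`
and column `j` by `(y₀ - yⱼ) / (1 - x₀ yⱼ)`. Pulling these factors out of the determinant gives
exactly the factors of the right-hand side that involve index `0`, and induction on `n` finishes.
-/

open Finset Matrix

theorem Fin.prod_prod_Ioi_succ {M : Type*} [CommMonoid M] {n : ℕ}
    (f : Fin (n + 1) → Fin (n + 1) → M) :
    ∏ i, ∏ j ∈ Ioi i, f i j =
      (∏ j : Fin n, f 0 j.succ) * ∏ i : Fin n, ∏ j ∈ Ioi i, f i.succ j.succ := by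
  rw [Fin.prod_univ_succ, Fin.prod_Ioi_zero]
  simp_rw [Fin.prod_Ioi_succ]

-- `(1 - x y₀)(1 - x₀ y) - (1 - x₀ y₀)(1 - x y) = (x₀ - x)(y₀ - y)`
theorem inv_one_sub_mul_sub_schur {K : Type*} [Field K] {x x₀ y y₀ : K} (h : 1 - x * y ≠ 0)
    (hx : 1 - x * y₀ ≠ 0) (hy : 1 - x₀ * y ≠ 0) :
    (1 - x * y)⁻¹ - (1 - x * y₀)⁻¹ * (1 - x₀ * y₀)⁻¹⁻¹ * (1 - x₀ * y)⁻¹ =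
      (x₀ - x) / (1 - x * y₀) * (1 - x * y)⁻¹ * ((y₀ - y) / (1 - x₀ * y)) := by
  grind

namespace Matrix

variable {K : Type*} [Field K]

theorem det_succ_eq_mul_det_schur {n : ℕ} (M : Matrix (Fin (n + 1)) (Fin (n + 1)) K)
    (h : M 0 0 ≠ 0) :
    M.det = M 0 0 *
      (of fun i j : Fin n => M i.succ j.succ - M i.succ 0 * (M 0 0)⁻¹ * M 0 j.succ).det := by
  set c : Fin (n + 1) → K := Fin.cons 0 fun i => M i.succ 0 * (M 0 0)⁻¹
  have hMN : M.det = (of fun i j => M i j - c i * M 0 j).det :=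
    det_eq_of_forall_row_eq_smul_add_const c 0 rfl fun i j => by simp [c]
  rw [hMN, det_succ_column_zero, Fin.sum_univ_succ]
  simp [c, submatrix, h]

def cauchyMatrix {ι κ : Type*} (x : ι → K) (y : κ → K) : Matrix ι κ K :=
  of fun i j => (1 - x i * y j)⁻¹

theorem det_cauchyMatrix_succ {n : ℕ} (x y : Fin (n + 1) → K) (h : ∀ i j, 1 - x i * y j ≠ 0) :
    (cauchyMatrix x y).det = (1 - x 0 * y 0)⁻¹ *
      (∏ i : Fin n, (x 0 - x i.succ) / (1 - x i.succ * y 0)) *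
      (∏ j : Fin n, (y 0 - y j.succ) / (1 - x 0 * y j.succ)) *
      (cauchyMatrix (Fin.tail x) (Fin.tail y)).det := by
  rw [det_succ_eq_mul_det_schur _ (inv_ne_zero (h 0 0)), mul_assoc, mul_assoc, ← det_mul_row,
    ← det_mul_column]
  congr 2
  ext i j
  simp only [cauchyMatrix, of_apply, Fin.tail]
  rw [inv_one_sub_mul_sub_schur (h _ _) (h _ _) (h _ _)]
  ring

end Matrix

theorem cauchy_determinant_general {F : Type*} [Field F] (n : ℕ)
    (x y : Fin n → F) (h : ∀ i j, 1 - x i * y j ≠ 0) :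
    (Matrix.of fun i j : Fin n => (1 - x i * y j)⁻¹).det
    = (∏ i : Fin n, ∏ j ∈ Finset.Ioi i, (x i - x j)) *
      (∏ i : Fin n, ∏ j ∈ Finset.Ioi i, (y i - y j)) /
      ∏ i : Fin n, ∏ j : Fin n, (1 - x i * y j) := by
  induction n with
  | zero => simp
  | succ n ih =>
    have ih_tail := ih (Fin.tail x) (Fin.tail y) fun i j => h i.succ j.succ
    rw [← cauchyMatrix] at ih_tail ⊢
    rw [det_cauchyMatrix_succ x y h, ih_tail, Fin.prod_prod_Ioi_succ, Fin.prod_prod_Ioi_succ]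
    simp only [Fin.prod_univ_succ, prod_mul_distrib, prod_inv_distrib, div_eq_mul_inv, mul_inv,
      Fin.tail]
    ring

/-- Cauchy determinant: For a field `F`, `n ≥ 1`, and
`x_1,…,x_n, y_1,…,y_n ∈ F` with `1 - x_i y_j ≠ 0` for all `i, j`,
`det(1/(1 - x_i y_j)) = ∏_{i<j}(x_i - x_j) ∏_{i<j}(y_i - y_j) / ∏_{i,j}(1 - x_i y_j)`. -/
theorem cauchy_determinant {F : Type*} [Field F] (n : ℕ) (hn : 1 ≤ n)
    (x y : Fin n → F) (h : ∀ i j, 1 - x i * y j ≠ 0) :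
    (Matrix.of fun i j : Fin n => (1 - x i * y j)⁻¹).det
    = (∏ i : Fin n, ∏ j ∈ Finset.Ioi i, (x i - x j)) *
      (∏ i : Fin n, ∏ j ∈ Finset.Ioi i, (y i - y j)) /
      ∏ i : Fin n, ∏ j : Fin n, (1 - x i * y j) :=
  cauchy_determinant_general n x y h
end

section
/- Let R be a commutative ring, n ≥ 1, m ≥ 1, and let x_1,…,x_n, y_1,…,y_m be elements of R. Let N = m + n and let M be the N×N matrix whose entry in row r (1 ≤ r ≤ N) and column c is x_c^{N−r} if 1 ≤ c ≤ n, and (−y_{c−n})^{r−1} if n+1 ≤ c ≤ N. Then det M = (−1)^{m(m+n−1)} · ∏_{1≤i<j≤n} (x_i − x_j) · ∏_{1≤i<j≤m} (y_i − y_j) · ∏_{i=1}^n ∏_{j=1}^m (1 + x_i y_j). -/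
/-!
The matrix is the transpose of a projective Vandermonde matrix on the points `(1, x i)` and
`(-y j, 1)` of `R × R` (`Matrix.projVandermonde`), so its determinant is the product over
pairs `c < c'` of the minors `p c'.1 * p c.2 - p c.1 * p c'.2`. Two `x`-points give
`x i - x j`, two `y`-points give `y i - y j`, and an `x`-point followed by a `y`-point gives
`-(1 + x i * y j)`; the resulting sign `(-1) ^ (n * m)` agrees with `(-1) ^ (m * (m + n - 1))`
because `m * (m - 1)` is even.
-/

open Finset
open scoped Matrix

section PairProducts

variable {M α : Type*} [CommMonoid M]

theorem prod_prod_Ioi_eq_prod_prod_ite {k : ℕ} (f : Fin k → Fin k → M) :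
    ∏ i, ∏ j ∈ Ioi i, f i j = ∏ i, ∏ j, if i < j then f i j else 1 := by
  simp_rw [← prod_filter, filter_lt_eq_Ioi]

theorem prod_prod_Ioi_append {a b : ℕ} (f : α → α → M) (u : Fin a → α)
    (v : Fin b → α) :
    ∏ i : Fin (a + b), ∏ j ∈ Ioi i, f (Fin.append u v i) (Fin.append u v j) =
      (∏ i, ∏ j ∈ Ioi i, f (u i) (u j)) * (∏ i, ∏ j, f (u i) (v j)) *
        ∏ i, ∏ j ∈ Ioi i, f (v i) (v j) := by
  have left_lt_right (i : Fin a) (j : Fin b) : Fin.castAdd b i < Fin.natAdd a j := by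
    simp only [Fin.lt_def, Fin.val_castAdd, Fin.val_natAdd]; omega
  have right_not_lt_left (j : Fin b) (i : Fin a) : ¬ Fin.natAdd a j < Fin.castAdd b i := by
    simp only [Fin.lt_def, Fin.val_castAdd, Fin.val_natAdd]; omega
  simp only [prod_prod_Ioi_eq_prod_prod_ite, Fin.prod_univ_add, Fin.append_left, Fin.append_right,
    (Fin.strictMono_castAdd b).lt_iff_lt, Fin.natAdd_lt_natAdd_iff, left_lt_right,
    right_not_lt_left, if_true, if_false, prod_const_one, mul_one, prod_mul_distrib, mul_assoc]

theorem prod_prod_Ioi_cast {k l : ℕ} (h : k = l) (f : Fin l → Fin l → M) :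
    ∏ i : Fin k, ∏ j ∈ Ioi i, f (Fin.cast h i) (Fin.cast h j) =
      ∏ i, ∏ j ∈ Ioi i, f i j := by
  subst h
  rfl

end PairProducts

theorem Fin.append_cast_add_comm {α : Sort*} {m n : ℕ} (u : Fin n → α) (v : Fin m → α)
    (c : Fin (m + n)) :
    Fin.append u v (Fin.cast (Nat.add_comm m n) c) =
      if h : (c : ℕ) < n then u ⟨c, h⟩ else v ⟨c - n, by omega⟩ := by
  split_ifs with h
  · exact Fin.append_left u v ⟨c, h⟩
  · convert Fin.append_right u v ⟨c - n, by omega⟩ using 2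
    ext
    simp only [Fin.val_cast, Fin.val_natAdd]
    omega

theorem neg_one_pow_mul_add_pred {R : Type*} [Monoid R] [HasDistribNeg R] (m n : ℕ) :
    (-1 : R) ^ (m * (m + n - 1)) = (-1) ^ (n * m) := by
  rcases Nat.eq_zero_or_pos m with rfl | hm
  · simp
  · rw [show m * (m + n - 1) = m * (m - 1) + n * m by
      rw [show m + n - 1 = m - 1 + n by omega]; ring, pow_add,
      (Nat.even_mul_pred_self m).neg_one_pow, one_mul]

/-- For a commutative ring `R`, `n, m ≥ 1`, `x : Fin n → R`,
`y : Fin m → R`, and `N = m + n`, let `M` be the `N × N` matrix whose entry in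
(0-indexed) row `r` and column `c` is `x_c ^ (N - 1 - r)` for `c < n`, and
`(-y_{c-n}) ^ r` for `n ≤ c < N`. Then
`det M = (-1)^{m(m+n-1)} ∏_{i<j}(x_i - x_j) ∏_{i<j}(y_i - y_j) ∏_{i,j}(1 + x_i y_j)`. -/
theorem mixed_vandermonde_det {R : Type*} [CommRing R] (n m : ℕ)
    (x : Fin n → R) (y : Fin m → R) :
    (Matrix.of fun r c : Fin (m + n) =>
      if h : (c : ℕ) < n then x ⟨c, h⟩ ^ (m + n - 1 - (r : ℕ))
      else (-y ⟨(c : ℕ) - n, by have := c.isLt; omega⟩) ^ (r : ℕ)).det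
    = (-1 : R) ^ (m * (m + n - 1)) *
      (∏ i : Fin n, ∏ j ∈ Finset.Ioi i, (x i - x j)) *
      (∏ i : Fin m, ∏ j ∈ Finset.Ioi i, (y i - y j)) *
      ∏ i : Fin n, ∏ j : Fin m, (1 + x i * y j) := by
  set q : Fin (n + m) → R × R := Fin.append (fun i ↦ (1, x i)) (fun j ↦ (-y j, 1))
  set cross : R × R → R × R → R := fun a b ↦ b.1 * a.2 - a.1 * b.2
  have hM : (Matrix.of fun r c : Fin (m + n) =>
      if h : (c : ℕ) < n then x ⟨c, h⟩ ^ (m + n - 1 - (r : ℕ))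
      else (-y ⟨(c : ℕ) - n, by have := c.isLt; omega⟩) ^ (r : ℕ)) =
      (Matrix.projVandermonde (Prod.fst ∘ q ∘ Fin.cast (Nat.add_comm m n))
        (Prod.snd ∘ q ∘ Fin.cast (Nat.add_comm m n)))ᵀ := by
    ext r c
    by_cases h : (c : ℕ) < n <;>
      simp [q, Matrix.projVandermonde_apply, Fin.append_cast_add_comm, h, Nat.sub_sub,
        Nat.add_comm 1]
  calc _ = ∏ i : Fin (m + n), ∏ j ∈ Ioi i,
        cross (q (Fin.cast (Nat.add_comm m n) i)) (q (Fin.cast (Nat.add_comm m n) j)) := by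
        rw [hM, Matrix.det_transpose, Matrix.det_projVandermonde]
        rfl
    _ = ∏ i : Fin (n + m), ∏ j ∈ Ioi i, cross (q i) (q j) :=
        prod_prod_Ioi_cast _ fun i j ↦ cross (q i) (q j)
    _ = (∏ i, ∏ j ∈ Ioi i, (x i - x j)) * (∏ i, ∏ j, -(1 + x i * y j)) *
          ∏ i, ∏ j ∈ Ioi i, (y i - y j) := by
        rw [prod_prod_Ioi_append]
        simp only [cross, one_mul, mul_one, neg_mul, neg_sub_left, neg_add_eq_sub, neg_sub,
          mul_comm (y _)]
    _ = _ := by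
      simp only [prod_neg, prod_mul_distrib, prod_const, card_univ, Fintype.card_fin, ← pow_mul,
        neg_one_pow_mul_add_pred]
      ring
end

section
/- Let R be a commutative ring, n ≥ 1, and let x, x_1, …, x_n be elements of R. Then the Newton interpolation identity for the n-th power holds: x^n = ∏_{j=1}^n (x − x_j) + Σ_{k=0}^{n−1} h_{n−k}(x_1,…,x_{k+1}) · ∏_{j=1}^{k} (x − x_j), where the k = 0 term is h_n(x_1) = x_1^n. -/
open MvPolynomial in
/-- The complete homogeneous symmetric function of degree `r` evaluated at
`z_1, …, z_s` (i.e. the sum of all monomials of degree `r` in `z_1, …, z_s`). -/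
noncomputable def completeHomogEval {R : Type*} [CommRing R] (s : ℕ) (z : Fin s → R)
    (r : ℕ) : R :=
  ∑ᶠ d : {d : Fin s → ℕ // ∑ i, d i = r}, ∏ i : Fin s, z i ^ d.1 i

section aux

variable {R : Type*} [CommRing R]

lemma completeHomogEval_eq_sum (s : ℕ) (z : Fin s → R) (r : ℕ) :
    completeHomogEval s z r
      = ∑ d ∈ Finset.Nat.antidiagonalTuple s r, ∏ i, z i ^ d i := by
  haveI : Fintype {d : Fin s → ℕ // ∑ i, d i = r} :=
    Fintype.subtype (Finset.Nat.antidiagonalTuple s r) fun d =>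
      Finset.Nat.mem_antidiagonalTuple
  rw [completeHomogEval, finsum_eq_sum_of_fintype,
    Finset.sum_subtype _ (fun d => Finset.Nat.mem_antidiagonalTuple)]

lemma che_zero (s : ℕ) (z : Fin s → R) : completeHomogEval s z 0 = 1 := by
  rw [completeHomogEval_eq_sum, Finset.Nat.antidiagonalTuple_zero_right]
  simp

lemma che_one (z : Fin 1 → R) (r : ℕ) : completeHomogEval 1 z r = z 0 ^ r := by
  rw [completeHomogEval_eq_sum, Finset.Nat.antidiagonalTuple_one]
  simp

lemma che_comp_equiv {s : ℕ} (z : Fin s → R) (r : ℕ) (e : Fin s ≃ Fin s) :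
    completeHomogEval s (z ∘ e) r = completeHomogEval s z r := by
  rw [completeHomogEval_eq_sum, completeHomogEval_eq_sum]
  refine Finset.sum_nbij' (fun d => d ∘ e.symm) (fun d => d ∘ e) ?_ ?_ ?_ ?_ ?_
  · intro d hd
    rw [Finset.Nat.mem_antidiagonalTuple] at hd ⊢
    rw [← hd]
    exact Equiv.sum_comp e.symm d
  · intro d hd
    rw [Finset.Nat.mem_antidiagonalTuple] at hd ⊢
    rw [← hd]
    exact Equiv.sum_comp e d
  · intro d _; funext i; simp
  · intro d _; funext i; simp
  · intro d _
    rw [← Equiv.prod_comp e (fun i => z i ^ (d ∘ e.symm) i)]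
    simp

lemma che_succ_succ (s : ℕ) (z : Fin (s + 1) → R) (r : ℕ) :
    completeHomogEval (s + 1) z (r + 1)
      = completeHomogEval s (z ∘ Fin.succ) (r + 1)
        + z 0 * completeHomogEval (s + 1) z r := by
  rw [completeHomogEval_eq_sum, completeHomogEval_eq_sum, completeHomogEval_eq_sum]
  rw [← Finset.sum_filter_add_sum_filter_not
    (Finset.Nat.antidiagonalTuple (s + 1) (r + 1)) (fun d => d 0 = 0)]
  congr 1
  · refine Finset.sum_nbij' (fun d => d ∘ Fin.succ) (fun d => Fin.cons 0 d)
      ?_ ?_ ?_ ?_ ?_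
    · intro d hd
      simp only [Finset.mem_filter, Finset.Nat.mem_antidiagonalTuple] at hd
      rw [Finset.Nat.mem_antidiagonalTuple]
      have := hd.1
      rw [Fin.sum_univ_succ, hd.2, zero_add] at this
      exact this
    · intro d hd
      rw [Finset.Nat.mem_antidiagonalTuple] at hd
      simp only [Finset.mem_filter, Finset.Nat.mem_antidiagonalTuple]
      constructor
      · rw [Fin.sum_univ_succ]
        simp [hd]
      · simp
    · intro d hd
      simp only [Finset.mem_filter] at hd
      have : d = Fin.cons (d 0) (d ∘ Fin.succ) := (Fin.cons_self_tail d).symm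
      rw [hd.2] at this
      exact this.symm
    · intro d _; funext i; simp
    · intro d hd
      simp only [Finset.mem_filter] at hd
      rw [Fin.prod_univ_succ, hd.2]
      simp
  · rw [Finset.mul_sum]
    refine Finset.sum_nbij' (fun d => Function.update d 0 (d 0 - 1))
      (fun d => Function.update d 0 (d 0 + 1)) ?_ ?_ ?_ ?_ ?_
    · intro d hd
      simp only [Finset.mem_filter, Finset.Nat.mem_antidiagonalTuple] at hd
      rw [Finset.Nat.mem_antidiagonalTuple]
      rw [Fin.sum_univ_succ] at hd ⊢
      have h1 : ∀ i : Fin s, Function.update d 0 (d 0 - 1) i.succ = d i.succ := by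
        intro i; exact Function.update_of_ne (Fin.succ_ne_zero i) _ _
      simp only [h1, Function.update_self]
      have := hd.1
      have h2 := hd.2
      omega
    · intro d hd
      rw [Finset.Nat.mem_antidiagonalTuple] at hd
      simp only [Finset.mem_filter, Finset.Nat.mem_antidiagonalTuple]
      rw [Fin.sum_univ_succ] at hd ⊢
      have h1 : ∀ i : Fin s, Function.update d 0 (d 0 + 1) i.succ = d i.succ := by
        intro i; exact Function.update_of_ne (Fin.succ_ne_zero i) _ _
      simp only [h1, Function.update_self]
      constructor
      · omega
      · omega
    · intro d hd
      simp only [Finset.mem_filter] at hd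
      funext i
      rcases eq_or_ne i 0 with h | h
      · subst h
        simp only [Function.update_self]
        have := hd.2
        omega
      · simp only [Function.update_of_ne h]
    · intro d _
      funext i
      rcases eq_or_ne i 0 with h | h
      · subst h
        simp only [Function.update_self]
        omega
      · simp only [Function.update_of_ne h]
    · intro d hd
      simp only [Finset.mem_filter] at hd
      obtain ⟨m, hm⟩ := Nat.exists_eq_succ_of_ne_zero hd.2
      rw [Fin.prod_univ_succ, Fin.prod_univ_succ]
      have h1 : ∀ i : Fin s, Function.update d 0 (d 0 - 1) i.succ = d i.succ := by
        intro i; exact Function.update_of_ne (Fin.succ_ne_zero i) _ _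
      simp only [h1, Function.update_self]
      rw [hm, Nat.succ_sub_one, pow_succ]
      ring

lemma che_succ_last (s : ℕ) (z : Fin (s + 1) → R) (r : ℕ) :
    completeHomogEval (s + 1) z (r + 1)
      = completeHomogEval s (z ∘ Fin.castSucc) (r + 1)
        + z (Fin.last s) * completeHomogEval (s + 1) z r := by
  have h1 := che_succ_succ s (z ∘ ⇑(Fin.revPerm (n := s + 1))) r
  rw [che_comp_equiv, che_comp_equiv] at h1
  have h2 : (z ∘ ⇑(Fin.revPerm (n := s + 1))) ∘ Fin.succ
      = (z ∘ Fin.castSucc) ∘ ⇑(Fin.revPerm (n := s)) := by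
    funext i
    simp [Fin.rev_succ]
  rw [h2, che_comp_equiv] at h1
  have h3 : (z ∘ ⇑(Fin.revPerm (n := s + 1))) 0 = z (Fin.last s) := by
    simp
  rw [h3] at h1
  exact h1

end aux

/-- Newton interpolation for the n-th power: For a commutative ring `R`,
`n ≥ 1`, `x ∈ R` and nodes `x_1, …, x_n` (given as `xs : ℕ → R`, 1-based),
`x^n = ∏_{j=1}^n (x - x_j) + Σ_{k=0}^{n-1} h_{n-k}(x_1,…,x_{k+1}) ∏_{j=1}^k (x - x_j)`. -/
theorem newton_interpolation_pow {R : Type*} [CommRing R] (n : ℕ) (hn : 1 ≤ n)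
    (x : R) (xs : ℕ → R) :
    x ^ n = (∏ j ∈ Finset.Icc 1 n, (x - xs j)) +
      ∑ k ∈ Finset.range n,
        completeHomogEval (k + 1) (fun i => xs ((i : ℕ) + 1)) (n - k) *
          ∏ j ∈ Finset.Icc 1 k, (x - xs j) := by
  have key : ∀ m : ℕ, x ^ m
      = ∑ k ∈ Finset.range (m + 1),
          completeHomogEval (k + 1) (fun i => xs ((i : ℕ) + 1)) (m - k) *
            ∏ j ∈ Finset.Icc 1 k, (x - xs j) := by
    intro m
    induction m with
    | zero => simp [che_zero]
    | succ m ih =>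
      set H : ℕ → ℕ → R :=
        fun s r => completeHomogEval (s + 1) (fun i => xs ((i : ℕ) + 1)) r with hH
      set P : ℕ → R := fun k => ∏ j ∈ Finset.Icc 1 k, (x - xs j) with hP
      have hPsucc : ∀ k : ℕ, P (k + 1) = P k * (x - xs (k + 1)) := by
        intro k
        rw [hP]
        exact Finset.prod_Icc_succ_top (Nat.succ_le_succ (Nat.zero_le k)) fun j => x - xs j
      have lhs_eq : x ^ (m + 1)
          = ∑ k ∈ Finset.range (m + 1), H k (m - k) * P (k + 1)
            + ∑ k ∈ Finset.range (m + 1), xs (k + 1) * H k (m - k) * P k := by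
        rw [pow_succ, ih, Finset.sum_mul, ← Finset.sum_add_distrib]
        refine Finset.sum_congr rfl fun k _ => ?_
        rw [hPsucc k]
        ring
      rw [lhs_eq]
      have e0 : ∑ k ∈ Finset.range (m + 1 + 1),
            completeHomogEval (k + 1) (fun i => xs ((i : ℕ) + 1)) (m + 1 - k) *
              ∏ j ∈ Finset.Icc 1 k, (x - xs j)
          = (∑ k ∈ Finset.range (m + 1),
              completeHomogEval (k + 1 + 1) (fun i => xs ((i : ℕ) + 1)) (m + 1 - (k + 1)) *
                ∏ j ∈ Finset.Icc 1 (k + 1), (x - xs j))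
            + completeHomogEval (0 + 1) (fun i => xs ((i : ℕ) + 1)) (m + 1 - 0) *
                ∏ j ∈ Finset.Icc 1 0, (x - xs j) :=
        Finset.sum_range_succ' _ (m + 1)
      rw [e0]
      have hterm : ∀ k ∈ Finset.range (m + 1),
          completeHomogEval (k + 1 + 1) (fun i => xs ((i : ℕ) + 1)) (m + 1 - (k + 1)) *
            ∏ j ∈ Finset.Icc 1 (k + 1), (x - xs j)
          = H (k + 1) (m - k) * P (k + 1) := by
        intro k _
        have : m + 1 - (k + 1) = m - k := by omega
        rw [this, hH, hP]
      rw [Finset.sum_congr rfl hterm]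
      have e1 : ∑ k ∈ Finset.range (m + 1), H (k + 1) (m - k) * P (k + 1)
          = (∑ k ∈ Finset.range m, H (k + 1) (m - k) * P (k + 1))
            + H (m + 1) (m - m) * P (m + 1) :=
        Finset.sum_range_succ _ m
      rw [e1]
      have hmid : ∀ k ∈ Finset.range m,
          H (k + 1) (m - k) * P (k + 1)
            = H k (m - k) * P (k + 1)
              + xs (k + 1 + 1) * H (k + 1) (m - (k + 1)) * P (k + 1) := by
        intro k hk
        rw [Finset.mem_range] at hk
        have hr : m - k = (m - (k + 1)) + 1 := by omega
        rw [hr]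
        simp only [hH]
        rw [che_succ_last]
        simp only [Function.comp_def, Fin.val_last, Fin.coe_castSucc]
        ring
      rw [Finset.sum_congr rfl hmid]
      have htop : H (m + 1) (m - m) * P (m + 1) = H m (m - m) * P (m + 1) := by
        rw [Nat.sub_self, hH]
        simp only [che_zero]
      rw [htop]
      have hzero : completeHomogEval (0 + 1) (fun i => xs ((i : ℕ) + 1)) (m + 1 - 0) *
            ∏ j ∈ Finset.Icc 1 0, (x - xs j)
          = xs (0 + 1) * H 0 (m - 0) * P 0 := by
        simp only [Nat.zero_add, Nat.sub_zero, hH, hP]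
        rw [che_one, che_one, pow_succ]
        simp
        ring
      rw [hzero]
      rw [Finset.sum_add_distrib]
      have e2 : ∑ k ∈ Finset.range (m + 1), H k (m - k) * P (k + 1)
          = (∑ k ∈ Finset.range m, H k (m - k) * P (k + 1)) + H m (m - m) * P (m + 1) :=
        Finset.sum_range_succ _ m
      have e3 : ∑ k ∈ Finset.range (m + 1), xs (k + 1) * H k (m - k) * P k
          = (∑ k ∈ Finset.range m, xs (k + 1 + 1) * H (k + 1) (m - (k + 1)) * P (k + 1))
            + xs (0 + 1) * H 0 (m - 0) * P 0 :=
        Finset.sum_range_succ' _ m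
      rw [e2, e3]
      ring
  rw [key n, Finset.sum_range_succ, Nat.sub_self, che_zero, one_mul, add_comm]
end
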